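/- arXiv:1905.06000 — 6 statements merged into one kernel-verified Lean document; each statement's English description precedes it below -/
import Mathlib

section
/- For all integers r ≥ 3 and n ≥ r, the number S_r(n) of r-monotone colorings of the r-element subsets of {1,…,n} satisfies S_r(n) ≥ 2^{n^{r-1}/r^{4r}} (the exponent being a real number). -/
/-- The `r`-element subsets of `Fin N`, representing the linearly ordered set `{1,…,N}`. -/
abbrev REdge (N r : ℕ) := {e : Finset (Fin N) // e.card = r}

/-- The `r`-subset obtained from an injective `(r+1)`-tuple by deleting its `j`-th entry. -/
def delEdge {N r : ℕ} (v : Fin (r + 1) → Fin N) (hv : Function.Injective v)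
    (j : Fin (r + 1)) : REdge N r :=
  ⟨(Finset.image v Finset.univ).erase (v j), by
    have h1 : v j ∈ Finset.image v Finset.univ :=
      Finset.mem_image_of_mem v (Finset.mem_univ j)
    have h2 := Finset.card_erase_of_mem h1
    have h3 : (Finset.image v Finset.univ).card = r + 1 := by
      rw [Finset.card_image_of_injective _ hv, Finset.card_univ, Fintype.card_fin]
    omega⟩

/-- A 2-coloring (by `-1` and `+1`) of the `r`-subsets of `{1,…,N}` is `r`-monotone if for
every `(r+1)`-subset `S = {v₁ < … < v_{r+1}}` the sequence
`(c(S∖{v_{r+1}}), …, c(S∖{v₁}))` is nondecreasing or nonincreasing. -/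
def IsMonotoneColoring (r N : ℕ) (c : REdge N r → ℤ) : Prop :=
  (∀ e, c e = -1 ∨ c e = 1) ∧
  ∀ v : Fin (r + 1) → Fin N, ∀ hv : StrictMono v,
    Monotone (fun j : Fin (r + 1) => c (delEdge v hv.injective j.rev)) ∨
    Antitone (fun j : Fin (r + 1) => c (delEdge v hv.injective j.rev))

/-- The `r`-subset `{v_i, …, v_{i+r-1}}` of a `k`-tuple. -/
def windowEdge {N k : ℕ} (r : ℕ) (v : Fin k → Fin N) (hv : Function.Injective v)
    (i : ℕ) (hi : i + r ≤ k) : REdge N r :=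
  ⟨Finset.image (fun j : Fin r => v ⟨i + j.1, by have := j.isLt; omega⟩) Finset.univ, by
    have hg : Function.Injective
        (fun j : Fin r => v ⟨i + j.1, by have := j.isLt; omega⟩) := by
      intro a b hab
      have h1 := hv hab
      have h2 : i + a.1 = i + b.1 := congrArg Fin.val h1
      exact Fin.ext (by omega)
    rw [Finset.card_image_of_injective _ hg, Finset.card_univ, Fintype.card_fin]⟩

/-- The coloring `c` contains a monochromatic copy of the monotone `r`-uniform path on
`k` vertices. -/
def HasMonoPath (r N k : ℕ) (c : REdge N r → ℤ) : Prop :=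
  ∃ v : Fin k → Fin N, ∃ hv : StrictMono v, ∃ ξ : ℤ,
    ∀ i : ℕ, ∀ hi : i + r ≤ k, c (windowEdge r v hv.injective i hi) = ξ

/-!
Write `r = m + 1`. Cut `{0, …, n-1}` into blocks of length `p`, the `i`-th of the first `m`
vertices of an edge being read in the block `[i p, (i+1) p)` (clamped), so that the first `m`
vertices determine a cell `k ∈ [0, p)^m`. For each `β : [0, p)^m → Bool`, colour an edge
`x₀ < … < x_m` by `+1` iff `n ≤ x_m + 2 ∑ kᵢ + β(k)`. This colouring is a monotone function of
the sorted vertex tuple (the factor `2` lets the bit `β(k)` be absorbed as soon as the cell grows),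
and deleting a vertex of an `(m+2)`-set with smaller index pushes every remaining vertex up, so
each such colouring is `r`-monotone. The edge whose first `m` vertices sit at `i p + κᵢ` and whose
last vertex is `n - 1 - 2 ∑ κᵢ` has colour `±1` according to `β(κ)`, so the `2^(p^m)` colourings
are distinct. Taking `p ≈ n / 3m` gives `n ≤ 4 r p` and hence the bound.
-/

open Finset

def sortedVerts {N r : ℕ} (e : REdge N r) : Fin r → Fin N := e.1.orderEmbOfFin e.2

def REdge.ofOrderEmb {N r : ℕ} (w : Fin r ↪o Fin N) : REdge N r :=
  ⟨univ.map w.toEmbedding, by simp⟩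

lemma sortedVerts_ofOrderEmb {N r : ℕ} (w : Fin r ↪o Fin N) :
    sortedVerts (REdge.ofOrderEmb w) = w :=
  congrArg DFunLike.coe (orderEmbOfFin_unique' _ fun i => mem_map_of_mem _ (mem_univ i)).symm

lemma sortedVerts_delEdge {N r : ℕ} {v : Fin (r + 1) → Fin N} (hv : StrictMono v)
    (j : Fin (r + 1)) : sortedVerts (delEdge v hv.injective j) = v ∘ j.succAbove :=
  (orderEmbOfFin_unique _
    (fun i => mem_erase.2 ⟨hv.injective.ne (j.succAbove_ne i), mem_image_of_mem _ (mem_univ _)⟩)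
    (hv.comp j.strictMono_succAbove)).symm

lemma Fin.antitone_succAbove {n : ℕ} (i : Fin n) :
    Antitone fun p : Fin (n + 1) => p.succAbove i := by
  intro p q h
  rw [Fin.le_def] at h ⊢
  simp only [Fin.succAbove, Fin.lt_def, Fin.val_castSucc]
  split_ifs <;> simp only [Fin.val_castSucc, Fin.val_succ] <;> omega

lemma isMonotoneColoring_comp_sortedVerts {N r : ℕ} {F : (Fin r → Fin N) → ℤ}
    (hF : Monotone F) (hval : ∀ x, F x = -1 ∨ F x = 1) :
    IsMonotoneColoring r N (F ∘ sortedVerts) := by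
  refine ⟨fun e => hval _, fun v hv => Or.inl fun j k hjk => hF ?_⟩
  rw [sortedVerts_delEdge hv, sortedVerts_delEdge hv]
  exact fun i => hv.monotone (Fin.antitone_succAbove i (Fin.rev_le_rev.2 hjk))

instance (r N : ℕ) : Finite {c : REdge N r → ℤ // IsMonotoneColoring r N c} :=
  Finite.of_injective (fun c e => (⟨c.1 e, c.2.1 e⟩ : ({-1, 1} : Set ℤ)))
    fun _ _ h => Subtype.ext (funext fun e => congrArg Subtype.val (congrFun h e))

section Threshold

variable {m p : ℕ}

def cellWeight (β : (Fin m → Fin p) → Bool) (k : Fin m → Fin p) : ℕ :=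
  2 * ∑ i, (k i : ℕ) + (β k).toNat

lemma cellWeight_mono (β : (Fin m → Fin p) → Bool) : Monotone (cellWeight β) := by
  intro k k' h
  obtain rfl | hne := eq_or_ne k k'
  · exact le_rfl
  obtain ⟨i, hi⟩ := Function.ne_iff.1 hne
  have hsum : ∑ i, (k i : ℕ) < ∑ i, (k' i : ℕ) :=
    sum_lt_sum (fun i _ => h i) ⟨i, mem_univ _, lt_of_le_of_ne (h i) (Fin.val_ne_of_ne hi)⟩
  have := Bool.toNat_le (β k)
  unfold cellWeight
  omega

lemma sum_val_le_mul_pred (κ : Fin m → Fin p) : ∑ i, (κ i : ℕ) ≤ m * (p - 1) := by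
  simpa using sum_le_card_nsmul univ (fun i => (κ i : ℕ)) (p - 1) fun i _ => by
    have := (κ i).isLt; omega

lemma mul_add_val_lt_mul (κ : Fin m → Fin p) {i : Fin m} {j : ℕ} (hij : (i : ℕ) < j) :
    (i : ℕ) * p + κ i < j * p := by
  have := (κ i).isLt
  have : ((i : ℕ) + 1) * p ≤ j * p := Nat.mul_le_mul_right p hij
  linarith [add_one_mul (i : ℕ) p]

def cellWitness (n : ℕ) (κ : Fin m → Fin p) : Fin (m + 1) → ℕ :=
  Fin.lastCases (n - 1 - 2 * ∑ i, (κ i : ℕ)) fun i => i * p + κ i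

@[simp] lemma cellWitness_castSucc (n : ℕ) (κ : Fin m → Fin p) (i : Fin m) :
    cellWitness n κ i.castSucc = i * p + κ i := by
  simp [cellWitness]

@[simp] lemma cellWitness_last (n : ℕ) (κ : Fin m → Fin p) :
    cellWitness n κ (Fin.last m) = n - 1 - 2 * ∑ i, (κ i : ℕ) := by
  simp [cellWitness]

lemma cellWitness_strictMono {n : ℕ} (hfit : m + 1 + 3 * m * (p - 1) ≤ n)
    (κ : Fin m → Fin p) : StrictMono (cellWitness n κ) := by
  have hS := sum_val_le_mul_pred κ
  have hmp : m * p ≤ n - 1 - 2 * ∑ i, (κ i : ℕ) := by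
    rcases p with _ | q
    · simp
    · simp only [Nat.add_sub_cancel, mul_assoc] at hfit hS
      rw [mul_add_one]
      omega
  intro a b hab
  induction a using Fin.lastCases with
  | last => exact absurd hab (Fin.le_last b).not_gt
  | cast i =>
    induction b using Fin.lastCases with
    | last => simpa using (mul_add_val_lt_mul κ i.isLt).trans_le hmp
    | cast j =>
      simp only [cellWitness_castSucc]
      exact (mul_add_val_lt_mul κ (Fin.castSucc_lt_castSucc_iff.1 hab)).trans_le (Nat.le_add_right _ _)

lemma cellWitness_lt {n : ℕ} (hfit : m + 1 + 3 * m * (p - 1) ≤ n) (κ : Fin m → Fin p)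
    (j : Fin (m + 1)) : cellWitness n κ j < n :=
  ((cellWitness_strictMono hfit κ).monotone (Fin.le_last j)).trans_lt (by simp; omega)

def cellWitnessEmb {n : ℕ} (hfit : m + 1 + 3 * m * (p - 1) ≤ n) (κ : Fin m → Fin p) :
    Fin (m + 1) ↪o Fin n :=
  OrderEmbedding.ofStrictMono (fun j => ⟨cellWitness n κ j, cellWitness_lt hfit κ j⟩)
    fun _ _ h => cellWitness_strictMono hfit κ h

@[simp] lemma val_cellWitnessEmb {n : ℕ} (hfit : m + 1 + 3 * m * (p - 1) ≤ n)
    (κ : Fin m → Fin p) (j : Fin (m + 1)) : (cellWitnessEmb hfit κ j : ℕ) = cellWitness n κ j :=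
  rfl

variable [NeZero p]

variable (p) in
def gridCell (y : Fin m → ℕ) : Fin m → Fin p :=
  fun i => ⟨min (p - 1) (y i - i * p), by have := NeZero.pos p; omega⟩

lemma gridCell_mono : Monotone (gridCell p : (Fin m → ℕ) → Fin m → Fin p) :=
  fun _ _ h i => Fin.mk_le_mk.2 (min_le_min_left _ (Nat.sub_le_sub_right (h i) _))

lemma gridCell_block (κ : Fin m → Fin p) : gridCell p (fun i => i * p + κ i) = κ :=
  funext fun i => Fin.ext (by simp [gridCell]; have := (κ i).isLt; omega)

def thresholdColoring (n : ℕ) (β : (Fin m → Fin p) → Bool) (x : Fin (m + 1) → Fin n) : ℤ :=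
  if n ≤ x (Fin.last m) + cellWeight β (gridCell p fun i => x i.castSucc) then 1 else -1

lemma thresholdColoring_mono (n : ℕ) (β : (Fin m → Fin p) → Bool) :
    Monotone (thresholdColoring n β) := by
  intro x x' h
  have hlast : (x (Fin.last m) : ℕ) ≤ x' (Fin.last m) := h _
  have hweight := cellWeight_mono β (gridCell_mono (p := p) fun i =>
    (h i.castSucc : (x i.castSucc : ℕ) ≤ x' i.castSucc))
  unfold thresholdColoring
  split_ifs <;> omega

lemma thresholdColoring_eq_neg_one_or_one (n : ℕ) (β : (Fin m → Fin p) → Bool)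
    (x : Fin (m + 1) → Fin n) : thresholdColoring n β x = -1 ∨ thresholdColoring n β x = 1 := by
  unfold thresholdColoring
  split_ifs <;> simp

lemma thresholdColoring_cellWitnessEmb {n : ℕ} (hfit : m + 1 + 3 * m * (p - 1) ≤ n)
    (β : (Fin m → Fin p) → Bool) (κ : Fin m → Fin p) :
    thresholdColoring n β (cellWitnessEmb hfit κ) = if β κ then 1 else -1 := by
  have hS := sum_val_le_mul_pred κ
  rw [mul_assoc] at hfit
  simp only [thresholdColoring, val_cellWitnessEmb, cellWitness_last, cellWitness_castSucc,
    gridCell_block, cellWeight]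
  cases β κ <;> simp <;> omega

end Threshold

lemma two_pow_pow_le_card_monotoneColorings {m n p : ℕ} [NeZero p]
    (hfit : m + 1 + 3 * m * (p - 1) ≤ n) :
    2 ^ p ^ m ≤ Nat.card {c : REdge n (m + 1) → ℤ // IsMonotoneColoring (m + 1) n c} := by
  let col (β : (Fin m → Fin p) → Bool) : {c // IsMonotoneColoring (m + 1) n c} :=
    ⟨thresholdColoring n β ∘ sortedVerts, isMonotoneColoring_comp_sortedVerts
      (thresholdColoring_mono n β) (thresholdColoring_eq_neg_one_or_one n β)⟩
  have hcol : Function.Injective col := by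
    intro β β' h
    funext κ
    have := congrFun (congrArg Subtype.val h) (REdge.ofOrderEmb (cellWitnessEmb hfit κ))
    simp only [col, Function.comp_apply, sortedVerts_ofOrderEmb,
      thresholdColoring_cellWitnessEmb] at this
    revert this
    cases β κ <;> cases β' κ <;> simp
  simpa using Nat.card_le_card_of_injective col hcol

lemma exists_blockSize {m n : ℕ} (hm : 1 ≤ m) (hn : m + 1 ≤ n) :
    ∃ p, 0 < p ∧ m + 1 + 3 * m * (p - 1) ≤ n ∧ n ≤ 4 * (m + 1) * p := by
  set q := (n - (m + 1)) / (3 * m)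
  have hle : 3 * m * q ≤ n - (m + 1) := Nat.mul_div_le _ _
  have hlt : n - (m + 1) < 3 * m * (q + 1) := Nat.lt_mul_div_succ _ (by omega)
  refine ⟨q + 1, q.succ_pos, by simpa using by omega, ?_⟩
  have : n < m + 1 + 3 * m * (q + 1) := by omega
  nlinarith

lemma pow_le_pow_mul_succ_pow {m n p : ℕ} (hm : 1 ≤ m) (h : n ≤ 4 * (m + 1) * p) :
    n ^ m ≤ p ^ m * (m + 1) ^ (4 * (m + 1)) := by
  have h4 : 4 * (m + 1) ≤ (m + 1) ^ 4 := by
    rw [pow_succ]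
    exact Nat.mul_le_mul_right _ ((by norm_num : 4 ≤ 2 ^ 3).trans (Nat.pow_le_pow_left (by omega) 3))
  calc n ^ m ≤ (4 * (m + 1) * p) ^ m := Nat.pow_le_pow_left h m
    _ ≤ ((m + 1) ^ 4 * p) ^ m := Nat.pow_le_pow_left (Nat.mul_le_mul_right p h4) m
    _ = p ^ m * (m + 1) ^ (4 * m) := by rw [mul_pow, ← pow_mul, mul_comm]
    _ ≤ p ^ m * (m + 1) ^ (4 * (m + 1)) :=
      Nat.mul_le_mul_left _ (Nat.pow_le_pow_right m.succ_pos (by omega))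

/-- Lower bound on the number `S_r(n)` of `r`-monotone colorings of the `r`-subsets of
`{1,…,n}`: `S_r(n) ≥ 2^{n^{r-1}/r^{4r}}`. -/
theorem count_monotone_colorings_lower (r n : ℕ) (hr : 3 ≤ r) (hn : r ≤ n) :
    (2 : ℝ) ^ ((n : ℝ) ^ (r - 1) / (r : ℝ) ^ (4 * r)) ≤
      Nat.card {c : REdge n r → ℤ // IsMonotoneColoring r n c} := by
  obtain ⟨m, rfl⟩ : ∃ m, r = m + 1 := ⟨r - 1, by omega⟩
  obtain ⟨p, hp, hfit, hnp⟩ := exists_blockSize (by omega) hn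
  have : NeZero p := ⟨hp.ne'⟩
  have hexp : (n : ℝ) ^ m / ((m + 1 : ℕ) : ℝ) ^ (4 * (m + 1)) ≤ ((p ^ m : ℕ) : ℝ) := by
    rw [div_le_iff₀ (by positivity)]
    exact_mod_cast pow_le_pow_mul_succ_pow (by omega) hnp
  rw [Nat.add_sub_cancel]
  calc (2 : ℝ) ^ ((n : ℝ) ^ m / ((m + 1 : ℕ) : ℝ) ^ (4 * (m + 1)))
      ≤ (2 : ℝ) ^ ((p ^ m : ℕ) : ℝ) := Real.rpow_le_rpow_of_exponent_le one_le_two hexp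
    _ = ((2 ^ p ^ m : ℕ) : ℝ) := by norm_cast
    _ ≤ _ := by exact_mod_cast two_pow_pow_le_card_monotoneColorings hfit
end

section
/- For every integer r ≥ 3, the number of transitive 2-colorings (by -1 and +1) of the r-element subsets of {1,…,r+1} is exactly 2^r + 2. -/
/-- A 2-coloring of the `r`-subsets of `{1,…,N}` is transitive if whenever
`v₁ < … < v_{r+1}` and `c({v₁,…,v_r}) = c({v₂,…,v_{r+1}})`, all `r`-subsets of
`{v₁,…,v_{r+1}}` receive the same color. -/
def IsTransitiveColoring (r N : ℕ) (c : REdge N r → ℤ) : Prop :=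
  (∀ e, c e = -1 ∨ c e = 1) ∧
  ∀ v : Fin (r + 1) → Fin N, ∀ hv : StrictMono v,
    c (delEdge v hv.injective (Fin.last r)) = c (delEdge v hv.injective 0) →
    ∀ j, c (delEdge v hv.injective j) = c (delEdge v hv.injective 0)


set_option linter.deprecated false in
lemma sm_id {n : ℕ} {v : Fin n → Fin n} (hv : StrictMono v) : v = id := by
  have hbij : Function.Bijective v :=
    (Fintype.bijective_iff_injective_and_card v).2 ⟨hv.injective, rfl⟩
  exact (StrictMono.range_inj hv strictMono_id).1
    (by rw [Set.range_id, Set.range_eq_univ.2 hbij.2])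

/-- The r-edge missing vertex `i`. -/
def Emap (r : ℕ) (i : Fin (r + 1)) : REdge (r + 1) r :=
  ⟨Finset.univ.erase i, by
    rw [Finset.card_erase_of_mem (Finset.mem_univ i), Finset.card_univ, Fintype.card_fin]
    omega⟩

lemma Emap_bij (r : ℕ) : Function.Bijective (Emap r) := by
  constructor
  · intro i j h
    by_contra hne
    have : i ∈ Finset.univ.erase j := Finset.mem_erase.2 ⟨hne, Finset.mem_univ i⟩
    have hval : Finset.univ.erase i = Finset.univ.erase j := congrArg Subtype.val h
    rw [← hval] at this
    exact (Finset.notMem_erase i _) this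
  · rintro ⟨e, he⟩
    have hne : e ≠ Finset.univ := by
      intro h; rw [h, Finset.card_univ, Fintype.card_fin] at he; omega
    obtain ⟨i, hi⟩ : ∃ i, i ∉ e := by
      by_contra h; push_neg at h
      exact hne (Finset.eq_univ_of_forall h)
    refine ⟨i, Subtype.ext ?_⟩
    have hsub : e ⊆ Finset.univ.erase i := fun x hx =>
      Finset.mem_erase.2 ⟨fun hxi => hi (hxi ▸ hx), Finset.mem_univ x⟩
    have hc : (Finset.univ.erase i).card = r := by
      rw [Finset.card_erase_of_mem (Finset.mem_univ i), Finset.card_univ, Fintype.card_fin]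
      omega
    exact ((Finset.eq_of_subset_of_card_le hsub (by omega))).symm

lemma delEdge_eq_Emap {r : ℕ} (v : Fin (r + 1) → Fin (r + 1)) (hv : StrictMono v)
    (j : Fin (r + 1)) : delEdge v hv.injective j = Emap r j := by
  have hid := sm_id hv
  subst hid
  apply Subtype.ext
  simp [delEdge, Emap, Finset.image_id]

/-- The number of transitive 2-colorings of the `r`-subsets of `{1,…,r+1}` is `2^r + 2`. -/
theorem count_transitive_colorings_succ (r : ℕ) (hr : 3 ≤ r) :
    Nat.card {c : REdge (r + 1) r → ℤ // IsTransitiveColoring r (r + 1) c} = 2 ^ r + 2 := by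
  classical
  set Q : (Fin (r + 1) → Bool) → Prop :=
    fun g => g (Fin.last r) = g 0 → ∀ j, g j = g 0 with hQ
  have hlast0 : (Fin.last r : Fin (r + 1)) ≠ 0 := by
    intro h
    have := congrArg Fin.val h
    simp [Fin.last] at this
    omega
  -- the equivalence E as Equiv
  let Ee : Fin (r + 1) ≃ REdge (r + 1) r := Equiv.ofBijective (Emap r) (Emap_bij r)
  have hEe : ∀ i, Ee i = Emap r i := fun i => rfl
  -- the main equivalence
  have key : {c : REdge (r + 1) r → ℤ // IsTransitiveColoring r (r + 1) c} ≃
      {g : Fin (r + 1) → Bool // Q g} := by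
    refine ⟨fun c => ⟨fun i => decide (c.1 (Emap r i) = 1), ?_⟩,
      fun g => ⟨fun e => if g.1 (Ee.symm e) then 1 else -1, ?_, ?_⟩, ?_, ?_⟩
    · -- Q holds
      obtain ⟨c, hc1, hc2⟩ := c
      intro h j
      simp only [decide_eq_decide] at h ⊢
      have hd : ∀ k, delEdge id (Function.injective_id) k = Emap r k :=
        delEdge_eq_Emap id strictMono_id
      have heq : c (Emap r (Fin.last r)) = c (Emap r 0) := by
        rcases hc1 (Emap r (Fin.last r)) with h1 | h1 <;>
          rcases hc1 (Emap r 0) with h2 | h2 <;> simp [h1, h2] at h ⊢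
      have := hc2 id strictMono_id (by rw [hd, hd]; exact heq) j
      rw [hd, hd] at this
      rw [this]
    · -- values ±1
      intro e; dsimp only; split <;> simp
    · -- transitivity
      intro v hv h j
      rw [delEdge_eq_Emap v hv, delEdge_eq_Emap v hv] at h
      rw [delEdge_eq_Emap v hv, delEdge_eq_Emap v hv]
      have hsymm : ∀ i, Ee.symm (Emap r i) = i := fun i => Ee.symm_apply_apply i
      dsimp only at h ⊢
      rw [hsymm, hsymm] at h
      rw [hsymm, hsymm]
      have hg : g.1 (Fin.last r) = g.1 0 := by
        by_contra hne
        rcases Bool.eq_false_or_eq_true (g.1 (Fin.last r)) with h1 | h1 <;>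
          rcases Bool.eq_false_or_eq_true (g.1 0) with h2 | h2 <;>
          simp [h1, h2] at h hne
      rw [g.2 hg j]
    · -- left inverse
      rintro ⟨c, hc1, hc2⟩
      apply Subtype.ext
      funext e
      simp only
      have h2 : Emap r (Ee.symm e) = e := Ee.apply_symm_apply e
      have h3 : c (Emap r (Ee.symm e)) = c e := congrArg c h2
      rcases hc1 e with h | h <;> simp [h3, h]
    · -- right inverse
      rintro ⟨g, hg⟩
      apply Subtype.ext
      funext i
      have hsymm : Ee.symm (Emap r i) = i := Ee.symm_apply_apply i
      simp only [hsymm]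
      cases hgi : g i <;> simp [hgi]
  rw [Nat.card_eq_of_bijective key key.bijective, Nat.card_eq_fintype_card,
    Fintype.card_subtype]
  -- now count the boolean colorings
  set T : Finset (Fin (r + 1) → Bool) :=
    Finset.univ.filter (fun g => ¬ g (Fin.last r) = g 0) with hT
  set C : Finset (Fin (r + 1) → Bool) :=
    Finset.univ.filter (fun g => ∀ j, g j = g 0) with hC
  have hunion : Finset.univ.filter Q = T ∪ C := by
    ext g
    simp only [hT, hC, hQ, Finset.mem_union, Finset.mem_filter, Finset.mem_univ, true_and]
    constructor
    · intro h
      by_cases he : g (Fin.last r) = g 0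
      · exact Or.inr (h he)
      · exact Or.inl he
    · rintro (h | h)
      · intro he; exact absurd he h
      · intro _; exact h
  have hdisj : Disjoint T C := by
    rw [Finset.disjoint_left]
    intro g hgT hgC
    simp only [hT, hC, Finset.mem_filter, Finset.mem_univ, true_and] at hgT hgC
    exact hgT (hgC (Fin.last r))
  have hCcard : C.card = 2 := by
    have : C = {fun _ => false, fun _ => true} := by
      ext g
      simp only [hC, Finset.mem_filter, Finset.mem_univ, true_and,
        Finset.mem_insert, Finset.mem_singleton]
      constructor
      · intro h
        cases h0 : g 0
        · left; funext j; rw [h j, h0]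
        · right; funext j; rw [h j, h0]
      · rintro (h | h) <;> subst h <;> intro j <;> rfl
    rw [this, Finset.card_insert_of_notMem, Finset.card_singleton]
    intro h
    have := congrFun (Finset.mem_singleton.1 h) 0
    simp at this
  have hTcard : T.card = 2 ^ r := by
    set T' : Finset (Fin (r + 1) → Bool) :=
      Finset.univ.filter (fun g => g (Fin.last r) = g 0) with hT'
    have hbij : T.card = T'.card := by
      refine Finset.card_bij' (fun g _ => Function.update g 0 (!(g 0)))
        (fun g _ => Function.update g 0 (!(g 0))) ?_ ?_ ?_ ?_
      · intro g hg
        simp only [hT, hT', Finset.mem_filter, Finset.mem_univ, true_and] at hg ⊢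
        simp only [Function.update_of_ne hlast0, Function.update_self]
        cases h1 : g (Fin.last r) <;> cases h2 : g 0 <;> simp_all
      · intro g hg
        simp only [hT, hT', Finset.mem_filter, Finset.mem_univ, true_and] at hg ⊢
        simp only [Function.update_of_ne hlast0, Function.update_self]
        cases h1 : g (Fin.last r) <;> cases h2 : g 0 <;> simp_all
      · intro g _
        funext x
        by_cases hx : x = 0
        · subst hx; simp [Function.update_self]
        · simp [Function.update_of_ne hx]
      · intro g _
        funext x
        by_cases hx : x = 0
        · subst hx; simp [Function.update_self]
        · simp [Function.update_of_ne hx]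
    have hsum : T'.card + T.card = 2 ^ (r + 1) := by
      have := Finset.card_filter_add_card_filter_not
        (s := (Finset.univ : Finset (Fin (r + 1) → Bool)))
        (p := fun g => g (Fin.last r) = g 0)
      rw [Finset.card_univ] at this
      simp only [Fintype.card_fun, Fintype.card_bool, Fintype.card_fin] at this
      exact this
    have hp : 2 ^ (r + 1) = 2 * 2 ^ r := by ring
    omega
  rw [hunion, Finset.card_union_of_disjoint hdisj, hTcard, hCcard]
end

section
/- For all integers r ≥ 3 and h ≥ 1, the number of r-monotone colorings of the r-element subsets of {1,…,r^h} is at least 2^{r^{(r-1)(h-1)-2r}} (the exponents being real numbers). -/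
namespace MonoCountAux

variable {N r : ℕ}

def ele (e : REdge N r) (i : Fin r) : Fin N := e.1.orderEmbOfFin e.2 i

def rle (e e' : REdge N r) : Prop := ∀ i, ele e i ≤ ele e' i

lemma rle_refl (e : REdge N r) : rle e e := fun _ => le_rfl

lemma rle_trans {e₁ e₂ e₃ : REdge N r} (h : rle e₁ e₂) (h' : rle e₂ e₃) : rle e₁ e₃ :=
  fun i => (h i).trans (h' i)

lemma ele_eq (e : REdge N r) {f : Fin r → Fin N} (hm : ∀ i, f i ∈ e.1)
    (hf : StrictMono f) (i : Fin r) : ele e i = f i :=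
  (congrFun (Finset.orderEmbOfFin_unique e.2 hm hf) i).symm

lemma image_ele (e : REdge N r) : Finset.image (ele e) Finset.univ = e.1 := by
  apply Finset.eq_of_subset_of_card_le
  · intro x hx
    simp only [Finset.mem_image] at hx
    obtain ⟨i, _, rfl⟩ := hx
    exact Finset.orderEmbOfFin_mem e.1 e.2 i
  · have hinj : Function.Injective (ele e) := fun a b hab =>
      (e.1.orderEmbOfFin e.2).injective hab
    rw [Finset.card_image_of_injective _ hinj]
    simp [e.2]

lemma eq_of_ele_eq {e e' : REdge N r} (h : ∀ i, ele e i = ele e' i) : e = e' := by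
  apply Subtype.ext
  rw [← image_ele e, ← image_ele e']
  exact Finset.image_congr (fun i _ => h i)

lemma succAbove_val {k : Fin (r+1)} {j : Fin r} :
    (k.succAbove j).val = if (j:ℕ) < k then (j:ℕ) else (j:ℕ)+1 := by
  rw [Fin.succAbove]
  split_ifs with h1 h2 h2 <;> simp_all [Fin.lt_def]

lemma ele_delEdge {v : Fin (r+1) → Fin N} (hv : StrictMono v) (k : Fin (r+1)) (i : Fin r) :
    ele (delEdge v hv.injective k) i = v (k.succAbove i) := by
  apply ele_eq
  · intro j
    simp only [delEdge, Finset.mem_erase]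
    refine ⟨fun hc => Fin.succAbove_ne k j (hv.injective hc), ?_⟩
    exact Finset.mem_image_of_mem v (Finset.mem_univ _)
  · intro a b hab
    apply hv
    rw [Fin.lt_def, succAbove_val, succAbove_val]
    have := hab
    rw [Fin.lt_def] at this
    split_ifs <;> omega

lemma rle_delEdge {v : Fin (r+1) → Fin N} (hv : StrictMono v) {k k' : Fin (r+1)}
    (hkk : k' ≤ k) : rle (delEdge v hv.injective k) (delEdge v hv.injective k') := by
  intro i
  rw [ele_delEdge hv, ele_delEdge hv]
  apply hv.monotone
  rw [Fin.le_def, succAbove_val, succAbove_val]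
  rw [Fin.le_def] at hkk
  split_ifs <;> omega

open Classical in
noncomputable def upCol (B : Finset (REdge N r)) : REdge N r → ℤ :=
  fun e => if ∃ b ∈ B, rle b e then 1 else -1

lemma upCol_mono (B : Finset (REdge N r)) : IsMonotoneColoring r N (upCol B) := by
  constructor
  · intro e
    unfold upCol
    split <;> simp
  · intro v hv
    left
    intro j j' hj
    have h1 : rle (delEdge v hv.injective j.rev) (delEdge v hv.injective j'.rev) :=
      rle_delEdge hv (Fin.rev_le_rev.mpr hj)
    simp only [upCol]
    by_cases h : ∃ b ∈ B, rle b (delEdge v hv.injective j.rev)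
    · obtain ⟨b, hb, hrb⟩ := h
      rw [if_pos ⟨b, hb, hrb⟩, if_pos ⟨b, hb, rle_trans hrb h1⟩]
    · rw [if_neg h]
      split <;> omega

lemma upCol_eq_one {B : Finset (REdge N r)} {a : REdge N r} (ha : a ∈ B) : upCol B a = 1 := by
  simp only [upCol]
  rw [if_pos ⟨a, ha, rle_refl a⟩]

def esum (e : REdge N r) : ℕ := ∑ i : Fin r, (ele e i).val

lemma antichain_of_esum {e e' : REdge N r} (h : rle e e') (hs : esum e = esum e') : e = e' := by
  have hle : ∀ i ∈ (Finset.univ : Finset (Fin r)), (ele e i).val ≤ (ele e' i).val :=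
    fun i _ => h i
  have := (Finset.sum_eq_sum_iff_of_le hle).mp hs
  exact eq_of_ele_eq fun i => Fin.ext (this i (Finset.mem_univ i))

lemma mem_of_upCol_one {A B : Finset (REdge N r)}
    (hA : ∀ a ∈ A, ∀ b ∈ A, rle a b → esum a = esum b) (hant : True)
    (hB : B ⊆ A) {a : REdge N r} (haA : a ∈ A) (h : upCol B a = 1) : a ∈ B := by
  simp only [upCol] at h
  by_cases hc : ∃ b ∈ B, rle b a
  · obtain ⟨b, hb, hrb⟩ := hc
    have : b = a := antichain_of_esum hrb (hA b (hB hb) a haA hrb)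
    exact this ▸ hb
  · rw [if_neg hc] at h
    omega

lemma upCol_injOn {A : Finset (REdge N r)}
    (hA : ∀ a ∈ A, ∀ b ∈ A, rle a b → esum a = esum b)
    {B B' : Finset (REdge N r)} (hB : B ⊆ A) (hB' : B' ⊆ A)
    (h : upCol B = upCol B') : B = B' := by
  ext a
  constructor
  · intro haB
    exact mem_of_upCol_one hA trivial hB' (hB haB) (h ▸ upCol_eq_one haB)
  · intro haB'
    exact mem_of_upCol_one hA trivial hB (hB' haB') (h.symm ▸ upCol_eq_one haB')

instance finiteMono : Finite {c : REdge N r → ℤ // IsMonotoneColoring r N c} := by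
  apply Finite.of_injective (fun c => (fun e => c.1 e = 1 : REdge N r → Prop))
  intro c c' hcc
  apply Subtype.ext
  funext e
  have h1 := c.2.1 e
  have h2 := c'.2.1 e
  have := congrFun hcc e
  simp only [eq_iff_iff] at this
  rcases h1 with h1 | h1 <;> rcases h2 with h2 | h2 <;> simp [h1, h2] at this ⊢

lemma two_pow_le_card {A : Finset (REdge N r)}
    (hA : ∀ a ∈ A, ∀ b ∈ A, rle a b → esum a = esum b) :
    2 ^ A.card ≤ Nat.card {c : REdge N r → ℤ // IsMonotoneColoring r N c} := by
  have hinj : Function.Injective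
      (fun B : {B // B ∈ A.powerset} =>
        (⟨upCol B.1, upCol_mono B.1⟩ : {c : REdge N r → ℤ // IsMonotoneColoring r N c})) := by
    intro B B' hBB
    have h1 : B.1 ⊆ A := Finset.mem_powerset.mp B.2
    have h2 : B'.1 ⊆ A := Finset.mem_powerset.mp B'.2
    have := congrArg Subtype.val hBB
    exact Subtype.ext (upCol_injOn hA h1 h2 this)
  have := Nat.card_le_card_of_injective _ hinj
  rwa [Nat.card_eq_fintype_card (α := {B // B ∈ A.powerset}), Fintype.card_coe,
    Finset.card_powerset] at this

lemma exists_antichain (hr : 0 < r) (hN : 0 < N) (n : ℕ)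
    (hn : (r * N) * n ≤ N.choose r) :
    ∃ A : Finset (REdge N r),
      (∀ a ∈ A, ∀ b ∈ A, rle a b → esum a = esum b) ∧ n ≤ A.card := by
  classical
  have hmaps : ∀ e ∈ (Finset.univ : Finset (REdge N r)), esum e ∈ Finset.range (r * N) := by
    intro e _
    rw [Finset.mem_range]
    calc esum e = ∑ i : Fin r, (ele e i).val := rfl
      _ < ∑ _i : Fin r, N := by
          apply Finset.sum_lt_sum_of_nonempty
          · exact ⟨⟨0, hr⟩, Finset.mem_univ _⟩
          · intro i _; exact (ele e i).isLt
      _ = r * N := by simp [Finset.sum_const, mul_comm]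
  have hcard : (Finset.range (r * N)).card * n ≤ (Finset.univ : Finset (REdge N r)).card := by
    rw [Finset.card_range, Finset.card_univ]
    have hce : Fintype.card (REdge N r) = N.choose r := by
      simpa using Fintype.card_finset_len (α := Fin N) r
    rw [hce]
    exact hn
  obtain ⟨y, _, hy⟩ := Finset.exists_le_card_fiber_of_mul_le_card_of_maps_to hmaps
    ⟨0, Finset.mem_range.mpr (by positivity)⟩ hcard
  refine ⟨Finset.filter (fun e => esum e = y) Finset.univ, ?_, hy⟩
  intro a ha b hb _
  rw [Finset.mem_filter] at ha hb
  rw [ha.2, hb.2]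

end MonoCountAux

namespace MonoCountAux2

lemma numeric_key {r h a : ℕ} (hr : 3 ≤ r) (hh : 1 ≤ h) (ha : (r-1)*h = a + (3*r-1)) :
    (r * r^h) * r^a ≤ (r^h).choose r := by
  have hfac : Nat.factorial r ≤ r^(2*r-2) :=
    (Nat.factorial_le_pow r).trans (Nat.pow_le_pow_right (by omega) (by omega))
  have key1 : r^(h-1) ≤ r^h + 1 - r := by
    have hx : 1 ≤ r^(h-1) := Nat.one_le_pow _ _ (by omega)
    have hrh : r^h = r^(h-1) * r := by rw [← pow_succ]; congr 1; omega
    generalize hxg : r^(h-1) = x at hx hrh ⊢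
    generalize hyg : r^h = y at hrh ⊢
    rcases eq_or_lt_of_le hx with h1 | h1
    · subst h1; omega
    · have := Nat.add_le_mul h1 (show 2 ≤ r by omega)
      omega
  have d1 : (r^h + 1 - r)^r ≤ (r^h).descFactorial r := Nat.pow_sub_le_descFactorial _ _
  have d2 : (r^h).descFactorial r = r.factorial * (r^h).choose r :=
    Nat.descFactorial_eq_factorial_mul_choose _ _
  have key2 : (r^(h-1))^r ≤ r.factorial * (r^h).choose r := by
    rw [← d2]; exact (Nat.pow_le_pow_left key1 r).trans d1
  have expeq : 2*r-2 + (1 + h + a) = (h-1)*r := by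
    have e1 : (r-1)*h = r*h - h := by rw [Nat.sub_one_mul]
    have e2 : (h-1)*r = h*r - r := by rw [Nat.sub_one_mul]
    rw [e2, mul_comm h r]
    rw [e1] at ha
    generalize r*h = p at ha ⊢
    omega
  have lhs_eq : r * r^h * r^a = r^(1+h+a) := by
    rw [pow_add, pow_add, pow_one]
  refine Nat.le_of_mul_le_mul_left ?_ (Nat.factorial_pos r)
  calc r.factorial * (r * r^h * r^a) ≤ r^(2*r-2) * r^(1+h+a) := by
        rw [lhs_eq]; exact Nat.mul_le_mul_right _ hfac
    _ = r^(2*r-2 + (1+h+a)) := (pow_add r _ _).symm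
    _ = r^((h-1)*r) := by rw [expeq]
    _ = (r^(h-1))^r := pow_mul r _ _
    _ ≤ r.factorial * (r^h).choose r := key2

lemma cast_helper1 {r h a : ℕ} (hr : 3 ≤ r) (hh : 1 ≤ h) (ha : (r-1)*h = a + (3*r-1)) :
    ((r:ℝ)-1)*((h:ℝ)-1) - 2*(r:ℝ) = (a:ℝ) := by
  have e1 : (r-1)*h = r*h - h := by rw [Nat.sub_one_mul]
  rw [e1] at ha
  have hle : h ≤ r*h := Nat.le_mul_of_pos_left h (by omega)
  have ha2 : r*h + 1 = a + 3*r + h := by omega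
  have ha3 : (r:ℝ)*(h:ℝ) + 1 = (a:ℝ) + 3*(r:ℝ) + (h:ℝ) := by exact_mod_cast ha2
  ring_nf
  ring_nf at ha3
  linarith

lemma cast_helper2 {r h : ℕ} (hr : 3 ≤ r) (hh : 1 ≤ h) (hcase : (r-1)*h < 3*r-1) :
    ((r:ℝ)-1)*((h:ℝ)-1) - 2*(r:ℝ) ≤ 0 := by
  have e1 : (r-1)*h = r*h - h := by rw [Nat.sub_one_mul]
  rw [e1] at hcase
  have hle : h ≤ r*h := Nat.le_mul_of_pos_left h (by omega)
  have h2 : r*h + 2 ≤ h + 3*r := by omega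
  have h3 : (r:ℝ)*(h:ℝ) + 2 ≤ (h:ℝ) + 3*(r:ℝ) := by exact_mod_cast h2
  nlinarith

end MonoCountAux2

open MonoCountAux MonoCountAux2 in
/-- The number of `r`-monotone colorings of the `r`-subsets of `{1,…,r^h}` is at least
`2^{r^{(r-1)(h-1) - 2r}}` (real exponents). -/
theorem count_monotone_colorings_tower (r h : ℕ) (hr : 3 ≤ r) (hh : 1 ≤ h) :
    (2 : ℝ) ^ ((r : ℝ) ^ (((r : ℝ) - 1) * ((h : ℝ) - 1) - 2 * (r : ℝ))) ≤
      Nat.card {c : REdge (r ^ h) r → ℤ // IsMonotoneColoring r (r ^ h) c} := by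
  have hr1 : (1:ℝ) ≤ (r:ℝ) := by exact_mod_cast (by omega : 1 ≤ r)
  rcases le_or_gt (3*r-1) ((r-1)*h) with hcase | hcase
  · obtain ⟨a, ha⟩ : ∃ a, (r-1)*h = a + (3*r-1) := ⟨(r-1)*h - (3*r-1), by omega⟩
    obtain ⟨A, hA, hAcard⟩ := exists_antichain (N := r^h) (r := r) (by omega)
      (Nat.pow_pos (by omega)) (r^a) (numeric_key hr hh ha)
    have hcount := two_pow_le_card hA
    have hcount2 : 2 ^ (r^a) ≤ Nat.card {c : REdge (r^h) r → ℤ // IsMonotoneColoring r (r^h) c} :=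
      le_trans (Nat.pow_le_pow_right (by omega) hAcard) hcount
    rw [cast_helper1 hr hh ha, Real.rpow_natCast,
      show ((r:ℝ))^a = ((r^a : ℕ) : ℝ) by push_cast; ring, Real.rpow_natCast]
    exact_mod_cast hcount2
  · have h1 : (r:ℝ) ^ (((r:ℝ)-1)*((h:ℝ)-1) - 2*(r:ℝ)) ≤ 1 :=
      Real.rpow_le_one_of_one_le_of_nonpos hr1 (cast_helper2 hr hh hcase)
    have h2 : (2:ℝ) ^ ((r:ℝ) ^ (((r:ℝ)-1)*((h:ℝ)-1) - 2*(r:ℝ))) ≤ (2:ℝ) ^ (1:ℝ) :=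
      Real.rpow_le_rpow_of_exponent_le one_le_two h1
    rw [Real.rpow_one] at h2
    refine h2.trans ?_
    have hconst : ∀ z : ℤ, (z = -1 ∨ z = 1) → IsMonotoneColoring r (r^h) (fun _ => z) :=
      fun z hz => ⟨fun _ => hz, fun v hv => Or.inl monotone_const⟩
    have hNr : r ≤ r^h := Nat.le_self_pow (by omega) r
    let e0 : REdge (r^h) r := ⟨Finset.univ.map (Fin.castLEEmb hNr), by simp⟩
    let c1 : {c : REdge (r^h) r → ℤ // IsMonotoneColoring r (r^h) c} :=
      ⟨fun _ => 1, hconst 1 (Or.inr rfl)⟩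
    let c2 : {c : REdge (r^h) r → ℤ // IsMonotoneColoring r (r^h) c} :=
      ⟨fun _ => -1, hconst (-1) (Or.inl rfl)⟩
    have hinj : Function.Injective (fun b : Bool => if b then c1 else c2) := by
      intro b b' hbb
      have hne : c1 ≠ c2 := by
        intro hc
        have := congrFun (congrArg Subtype.val hc) e0
        simp [c1, c2] at this
      cases b <;> cases b' <;> simp_all
    have := Nat.card_le_card_of_injective _ hinj
    rw [Nat.card_eq_fintype_card (α := Bool), Fintype.card_bool] at this
    exact_mod_cast this
end

section
/- Fix an integer n ≥ 1 and an integer r ≥ 2, and let A, B, C be pairwise distinct elements of F_r(n). If r ≥ 3: when γ(A,B) ≢_{r-1} γ(B,C), γ(A,C) equals the ≺_{r-1}-minimum of γ(A,B) and γ(B,C); when γ(A,B) ≡_{r-1} γ(B,C), both γ(A,B) ≺_{r-1} γ(A,C) and γ(B,C) ≺_{r-1} γ(A,C) hold (strict precedence of equivalence classes). If r = 2: when γ(A,B) ≠ γ(B,C), γ(A,C) ∈ {γ(A,B), γ(B,C)}; when γ(A,B) = γ(B,C), γ(A,C) = γ(A,B) = γ(B,C). -/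
open scoped Classical

/-- The carrier type of the set `F_r(n)`: `F_1(n) ⊆ Bool` (with `false = -` and
`true = +`), `F_2(n) ⊆ ℕ × ℕ`, and `F_r(n)` consists of finite sets of elements of
`F_{r-1}(n)` for `r ≥ 3`. -/
def FT : ℕ → Type
  | 0 => Bool
  | 1 => Bool
  | 2 => ℕ × ℕ
  | (r + 3) => Finset (FT (r + 2))

/-- Decidable equality for `FT r`. -/
def FTdecEq : (r : ℕ) → DecidableEq (FT r)
  | 0 => inferInstanceAs (DecidableEq Bool)
  | 1 => inferInstanceAs (DecidableEq Bool)
  | 2 => inferInstanceAs (DecidableEq (ℕ × ℕ))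
  | (r + 3) => letI := FTdecEq (r + 2); inferInstanceAs (DecidableEq (Finset (FT (r + 2))))

attribute [instance] FTdecEq

/-- `FT r` is inhabited. -/
def FTinhab : (r : ℕ) → Inhabited (FT r)
  | 0 => ⟨false⟩
  | 1 => ⟨false⟩
  | 2 => ⟨(0, 0)⟩
  | (r + 3) => letI := FTdecEq (r + 2); ⟨(∅ : Finset (FT (r + 2)))⟩

attribute [instance] FTinhab

/-- The data attached to level `r` of the construction: membership in `F_r(n)`, in
`F_r^-(n)` and in `F_r^+(n)`, the map `σ_r` and the relation `<_r`. -/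
structure LevelData (α : Type) where
  mem : α → Prop
  memMinus : α → Prop
  memPlus : α → Prop
  sigma : α → α
  lt : α → α → Prop

/-- The canonical representative of the `≡_r`-class of `a`: `a` itself if `a ∈ F_r^-(n)`
and `σ_r(a)` otherwise (identifying each `A ∈ F_r^-(n)` with `σ_r(A)`). -/
noncomputable def LevelData.rep {α : Type} (D : LevelData α) (a : α) : α :=
  if D.memMinus a then a else D.sigma a

/-- The equivalence `≡_r`: `a ≡ b` iff `a = b`, `a = σ(b)` or `b = σ(a)`. -/
def LevelData.eqv {α : Type} (D : LevelData α) (a b : α) : Prop :=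
  a = b ∨ a = D.sigma b ∨ b = D.sigma a

/-- The strict order `≺_r` on `≡_r`-equivalence classes (as a relation on elements):
identifying each `A ∈ F_r^-(n)` with `σ_r(A)`, the class of `a` strictly precedes the
class of `b` iff the representatives are distinct and `rep a <_r rep b`. -/
noncomputable def LevelData.prec {α : Type} (D : LevelData α) (a b : α) : Prop :=
  D.rep a ≠ D.rep b ∧ D.lt (D.rep a) (D.rep b)

/-- `γ(A,B)` for `r ≥ 3`: the element of `B` lying in the `≺_{r-1}`-first equivalence
class on which `A` and `B` differ. (For transversals `A ≠ B` this is the unique element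
`b ∈ B ∖ A` whose class weakly precedes the class of every element of `B ∖ A`.) -/
noncomputable def gammaOf {α : Type} [DecidableEq α] [Nonempty α] (D : LevelData α)
    (A B : Finset α) : α :=
  Classical.epsilon (fun b => b ∈ B \ A ∧ ∀ b' ∈ B \ A, b' = b ∨ D.prec b b')

/-- The construction of level `r` data from level `r-1` data (for `r ≥ 3`):
`F_r(n)` consists of the sets containing exactly one element from each
`≡_{r-1}`-equivalence class; `F_r^-(n)` (resp. `F_r^+(n)`) consists of those members
containing the `<_{r-1}`-minimum (resp. maximum) of `F_{r-1}(n)`;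
`σ_r(X) = {σ_{r-1}(A) : A ∈ X}`; and `A <_r B` iff `γ(A,B) ∈ F_{r-1}^+(n)`. -/
noncomputable def levelSucc {α : Type} [DecidableEq α] [Nonempty α] (D : LevelData α) :
    LevelData (Finset α) where
  mem X := (∀ a ∈ X, D.mem a) ∧ ∀ a, D.mem a → (a ∈ X ↔ D.sigma a ∉ X)
  memMinus X :=
    Classical.epsilon (fun M => D.mem M ∧ ∀ B, D.mem B → B ≠ M → D.lt M B) ∈ X
  memPlus X :=
    Classical.epsilon (fun M => D.mem M ∧ ∀ B, D.mem B → B ≠ M → D.lt B M) ∈ X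
  sigma X := X.image D.sigma
  lt A B := D.memPlus (gammaOf D A B)

/-- Level 1: `F_1(n) = {-,+}` with `- = false` and `+ = true`, `σ_1(-) = +`, and
`- <_1 +`. -/
noncomputable def level1 : LevelData (FT 1) where
  mem _ := True
  memMinus b := b = false
  memPlus b := b = true
  sigma b := Bool.not b
  lt a b := a = false ∧ b = true

/-- Level 2: `F_2^-(n) = {(2n-i+1, i) : 1 ≤ i ≤ n}`, `F_2^+(n) = {(i, 2n-i+1) : 1 ≤ i ≤ n}`,
`σ_2` swaps the coordinates, and `(a₁,a₂) <_2 (b₁,b₂)` iff `a₁ > b₁`. -/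
noncomputable def level2 (n : ℕ) : LevelData (FT 2) where
  mem p := ∃ i : ℕ, 1 ≤ i ∧ i ≤ n ∧ (p = (2 * n - i + 1, i) ∨ p = (i, 2 * n - i + 1))
  memMinus p := ∃ i : ℕ, 1 ≤ i ∧ i ≤ n ∧ p = (2 * n - i + 1, i)
  memPlus p := ∃ i : ℕ, 1 ≤ i ∧ i ≤ n ∧ p = (i, 2 * n - i + 1)
  sigma p := (p.2, p.1)
  lt p q := q.1 < p.1

/-- The level data of the construction, for every level `r` (levels `0` and `1` both
carry the level-1 data). -/
noncomputable def L (n : ℕ) : (r : ℕ) → LevelData (FT r)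
  | 0 => level1
  | 1 => level1
  | 2 => level2 n
  | (r + 3) => levelSucc (L n (r + 2))

/-- The map `γ : F_{k+2}(n) × F_{k+2}(n) → F_{k+1}(n)` (so `γ` at level `r = k + 2`).
For `r = 2`, `γ(A,B) = -` iff `A.1 < B.1`; for `r ≥ 3`, `γ(A,B)` is the element of `B`
in the `≺_{r-1}`-first equivalence class on which `A` and `B` differ. -/
noncomputable def gam (n : ℕ) : (k : ℕ) → FT (k + 2) → FT (k + 2) → FT (k + 1)
  | 0, p, q => decide (q.1 < p.1)
  | (k + 1), A, B => gammaOf (L n (k + 2)) A B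

/-- Membership in `F_r(n)`. -/
noncomputable def memF (n r : ℕ) : FT r → Prop := (L n r).mem

/-- The (non-strict) relation `≤_r`: `A <_r B` or `A = B`. -/
noncomputable def leF (n r : ℕ) (a b : FT r) : Prop := (L n r).lt a b ∨ a = b

/-- `Γ(B₁,…,B_k) = (γ(B₁,B₂),…,γ(B_{k-1},B_k))`, mapping sequences over `F_{k+2}(n)` to
sequences over `F_{k+1}(n)`. -/
noncomputable def Gam (n k : ℕ) (l : List (FT (k + 2))) : List (FT (k + 1)) :=
  List.zipWith (gam n k) l l.tail

/-- `Γ^i`, iterated `i` times from level `b + i + 1` down to level `b + 1`. -/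
noncomputable def GamIter (n : ℕ) :
    (i b : ℕ) → List (FT (b + i + 1)) → List (FT (b + 1))
  | 0, _, l => l
  | (i + 1), b, l => GamIter n i b (Gam n (b + i) l)

/-- The full iteration `Γ^{k+1}` from level `k + 2` down to level `1`. -/
noncomputable def GamFull (n : ℕ) : (k : ℕ) → List (FT (k + 2)) → List (FT 1)
  | 0, l => Gam n 0 l
  | (k + 1), l => GamFull n k (Gam n (k + 1) l)


namespace GammaDel

set_option linter.unusedSectionVars false

variable {α : Type} [DecidableEq α] [Nonempty α]

/-- Invariants of a level of the construction. -/
structure Good (D : LevelData α) : Prop where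
  sigma_mem : ∀ a, D.mem a → D.mem (D.sigma a)
  sigma_sigma : ∀ a, D.mem a → D.sigma (D.sigma a) = a
  sigma_ne : ∀ a, D.mem a → D.sigma a ≠ a
  minus_iff : ∀ a, D.mem a → (D.memMinus a ↔ ¬ D.memMinus (D.sigma a))
  plus_iff : ∀ a, D.mem a → (D.memPlus a ↔ ¬ D.memPlus (D.sigma a))
  minus_not_plus : ∀ a, D.mem a → (D.memMinus a ↔ ¬ D.memPlus a)
  lt_total : ∀ a b, D.mem a → D.mem b → a ≠ b → D.lt a b ∨ D.lt b a
  lt_asymm : ∀ a b, D.mem a → D.mem b → a ≠ b → D.lt a b → ¬ D.lt b a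
  lt_trans : ∀ a b c, D.mem a → D.mem b → D.mem c → a ≠ b → b ≠ c → a ≠ c →
    D.lt a b → D.lt b c → D.lt a c
  min_spec : ∃ M, D.mem M ∧ (∀ B, D.mem B → B ≠ M → D.lt M B) ∧
    (∀ B, D.mem B → B ≠ D.sigma M → D.lt B (D.sigma M))
  finite : ∃ U : Finset α, ∀ a, D.mem a ↔ a ∈ U

/-- The defining property of `γ(X,Y)`. -/
def gammaP (D : LevelData α) (X Y : Finset α) (b : α) : Prop :=
  b ∈ Y \ X ∧ ∀ b' ∈ Y \ X, b' = b ∨ D.prec b b'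

theorem prec_congr_right {D : LevelData α} {a c c' : α} (h : D.rep c = D.rep c') :
    D.prec a c ↔ D.prec a c' := by unfold LevelData.prec; rw [h]

theorem prec_congr_left {D : LevelData α} {a a' c : α} (h : D.rep a = D.rep a') :
    D.prec a c ↔ D.prec a' c := by unfold LevelData.prec; rw [h]

variable {D : LevelData α} (hD : Good D)
include hD

theorem rep_mem {a : α} (ha : D.mem a) : D.mem (D.rep a) := by
  unfold LevelData.rep
  by_cases h : D.memMinus a
  · rwa [if_pos h]
  · rw [if_neg h]
    exact hD.sigma_mem a ha

theorem rep_minus {a : α} (ha : D.mem a) : D.memMinus (D.rep a) := by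
  unfold LevelData.rep
  by_cases h : D.memMinus a
  · rwa [if_pos h]
  · rw [if_neg h]
    by_contra h2
    exact h ((hD.minus_iff a ha).2 h2)

theorem rep_sigma {a : α} (ha : D.mem a) : D.rep (D.sigma a) = D.rep a := by
  unfold LevelData.rep
  by_cases h : D.memMinus a
  · have h2 : ¬ D.memMinus (D.sigma a) := (hD.minus_iff a ha).1 h
    rw [if_neg h2, if_pos h, hD.sigma_sigma a ha]
  · have h2 : D.memMinus (D.sigma a) := by
      by_contra h3; exact h ((hD.minus_iff a ha).2 h3)
    rw [if_pos h2, if_neg h]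

theorem rep_eq_iff {a b : α} (ha : D.mem a) (hb : D.mem b) :
    D.rep a = D.rep b ↔ D.eqv a b := by
  constructor
  · intro h
    unfold LevelData.rep at h
    by_cases h1 : D.memMinus a <;> by_cases h2 : D.memMinus b <;>
      simp only [h1, h2, if_true, if_false] at h
    · exact Or.inl h
    · exact Or.inr (Or.inl h)
    · exact Or.inr (Or.inr h.symm)
    · left
      have := congrArg D.sigma h
      rwa [hD.sigma_sigma a ha, hD.sigma_sigma b hb] at this
  · rintro (rfl | rfl | rfl)
    · rfl
    · exact rep_sigma hD hb
    · exact (rep_sigma hD ha).symm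

theorem prec_asymm {a b : α} (ha : D.mem a) (hb : D.mem b) (h : D.prec a b) :
    ¬ D.prec b a := by
  rintro ⟨hne, hlt⟩
  exact hD.lt_asymm _ _ (rep_mem hD hb) (rep_mem hD ha) hne hlt h.2

theorem prec_total {a b : α} (ha : D.mem a) (hb : D.mem b)
    (h : D.rep a ≠ D.rep b) : D.prec a b ∨ D.prec b a := by
  rcases hD.lt_total _ _ (rep_mem hD ha) (rep_mem hD hb) h with h' | h'
  · exact Or.inl ⟨h, h'⟩
  · exact Or.inr ⟨h.symm, h'⟩

theorem prec_trans {a b c : α} (ha : D.mem a) (hb : D.mem b) (hc : D.mem c)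
    (h1 : D.prec a b) (h2 : D.prec b c) : D.prec a c := by
  have hac : D.rep a ≠ D.rep c := by
    intro he
    exact hD.lt_asymm _ _ (rep_mem hD ha) (rep_mem hD hb) h1.1 h1.2 (by rw [he]; exact h2.2)
  exact ⟨hac, hD.lt_trans _ _ _ (rep_mem hD ha) (rep_mem hD hb) (rep_mem hD hc)
    h1.1 h2.1 hac h1.2 h2.2⟩

/-! Transversals -/

omit hD in
theorem tr_mem {X : Finset α} (hX : (levelSucc D).mem X) {a : α} (ha : a ∈ X) :
    D.mem a := hX.1 a ha

omit hD in
theorem tr_iff {X : Finset α} (hX : (levelSucc D).mem X) {a : α} (ha : D.mem a) :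
    a ∈ X ↔ D.sigma a ∉ X := hX.2 a ha

theorem no_ties {X : Finset α} (hX : (levelSucc D).mem X) {a b : α}
    (ha : a ∈ X) (hb : b ∈ X) (h : D.rep a = D.rep b) : a = b := by
  rcases (rep_eq_iff hD (tr_mem hX ha) (tr_mem hX hb)).1 h with rfl | rfl | rfl
  · rfl
  · exact absurd ha ((tr_iff hX (tr_mem hX hb)).1 hb)
  · exact absurd hb ((tr_iff hX (tr_mem hX ha)).1 ha)

theorem sdiff_nonempty {X Y : Finset α} (hX : (levelSucc D).mem X)
    (hY : (levelSucc D).mem Y) (hne : X ≠ Y) : (Y \ X).Nonempty := by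
  rw [Finset.sdiff_nonempty]
  intro hsub
  apply hne
  apply Finset.Subset.antisymm _ hsub
  intro a haX
  by_contra haY
  have hma := tr_mem hX haX
  have : D.sigma a ∈ Y := by
    by_contra h
    exact haY (((tr_iff hY hma)).2 h)
  exact ((tr_iff hX hma).1 haX) (hsub this)

theorem finset_min : ∀ s : Finset α, s.Nonempty → (∀ a ∈ s, D.mem a) →
    (∀ a ∈ s, ∀ b ∈ s, D.rep a = D.rep b → a = b) →
    ∃ b ∈ s, ∀ c ∈ s, c = b ∨ D.prec b c := by
  intro s
  induction s using Finset.induction_on with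
  | empty => intro h; simp at h
  | @insert a s ha ih =>
    intro _ hm hd
    rcases s.eq_empty_or_nonempty with rfl | hs
    · exact ⟨a, by simp, by simp⟩
    · obtain ⟨b, hb, hmin⟩ := ih hs (fun x hx => hm x (Finset.mem_insert_of_mem hx))
        (fun x hx y hy => hd x (Finset.mem_insert_of_mem hx) y (Finset.mem_insert_of_mem hy))
      by_cases hrep : D.rep a = D.rep b
      · exact absurd (hd a (Finset.mem_insert_self a s) b (Finset.mem_insert_of_mem hb) hrep)
          (fun h => ha (h ▸ hb))
      · have hma := hm a (Finset.mem_insert_self a s)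
        have hmb := hm b (Finset.mem_insert_of_mem hb)
        rcases prec_total hD hma hmb hrep with h | h
        · refine ⟨a, Finset.mem_insert_self a s, ?_⟩
          intro c hc
          rcases Finset.mem_insert.1 hc with rfl | hc
          · exact Or.inl rfl
          · rcases hmin c hc with rfl | h2
            · exact Or.inr h
            · exact Or.inr (prec_trans hD hma hmb (hm c (Finset.mem_insert_of_mem hc)) h h2)
        · refine ⟨b, Finset.mem_insert_of_mem hb, ?_⟩
          intro c hc
          rcases Finset.mem_insert.1 hc with rfl | hc
          · exact Or.inr h
          · exact hmin c hc

theorem gamma_exists {X Y : Finset α} (hX : (levelSucc D).mem X)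
    (hY : (levelSucc D).mem Y) (hne : X ≠ Y) : ∃ b, gammaP D X Y b := by
  obtain ⟨b, hb, hmin⟩ := finset_min hD (Y \ X) (sdiff_nonempty hD hX hY hne)
    (fun a haa => tr_mem hY (Finset.mem_sdiff.1 haa).1)
    (fun a haa b hbb h => no_ties hD hY (Finset.mem_sdiff.1 haa).1 (Finset.mem_sdiff.1 hbb).1 h)
  exact ⟨b, hb, hmin⟩

theorem gamma_spec {X Y : Finset α} (hX : (levelSucc D).mem X)
    (hY : (levelSucc D).mem Y) (hne : X ≠ Y) : gammaP D X Y (gammaOf D X Y) :=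
  Classical.epsilon_spec (gamma_exists hD hX hY hne)

theorem gamma_eq {X Y : Finset α} (hX : (levelSucc D).mem X)
    (hY : (levelSucc D).mem Y) (hne : X ≠ Y) {b : α} (hb : gammaP D X Y b) :
    gammaOf D X Y = b := by
  obtain ⟨hg, hgmin⟩ := gamma_spec hD hX hY hne
  rcases hb.2 _ hg with h | h
  · exact h
  · rcases hgmin _ hb.1 with h' | h'
    · exact h'.symm
    · exact absurd h' (prec_asymm hD (tr_mem hY (Finset.mem_sdiff.1 hb.1).1)
        (tr_mem hY (Finset.mem_sdiff.1 hg).1) h)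

theorem gamma_mem_sdiff {X Y : Finset α} (hX : (levelSucc D).mem X)
    (hY : (levelSucc D).mem Y) (hne : X ≠ Y) : gammaOf D X Y ∈ Y \ X :=
  (gamma_spec hD hX hY hne).1

theorem gamma_sigma {X Y : Finset α} (hX : (levelSucc D).mem X)
    (hY : (levelSucc D).mem Y) (hne : X ≠ Y) :
    gammaOf D Y X = D.sigma (gammaOf D X Y) := by
  obtain ⟨hbmem, hbmin⟩ := gamma_spec hD hX hY hne
  set b := gammaOf D X Y with hbdef
  rw [Finset.mem_sdiff] at hbmem
  have hmb : D.mem b := tr_mem hY hbmem.1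
  apply gamma_eq hD hY hX (Ne.symm hne)
  constructor
  · rw [Finset.mem_sdiff]
    constructor
    · by_contra h
      exact hbmem.2 ((tr_iff hX hmb).2 h)
    · intro h
      exact ((tr_iff hY hmb).1 hbmem.1) h
  · intro x hx
    rw [Finset.mem_sdiff] at hx
    have hmx : D.mem x := tr_mem hX hx.1
    by_cases hrx : D.rep x = D.rep b
    · left
      -- x and σ b both in X with same rep
      have hsbX : D.sigma b ∈ X := by
        by_contra h
        exact hbmem.2 ((tr_iff hX hmb).2 h)
      have := no_ties hD hX hx.1 hsbX (by rw [hrx, rep_sigma hD hmb])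
      exact this
    · have hpre : D.prec b x := by
        rcases prec_total hD hmb hmx (fun h => hrx h.symm) with h | h
        · exact h
        · -- prec x b: then σ x ∈ Y \ X leads to contradiction
          exfalso
          have hsxY : D.sigma x ∈ Y := by
            by_contra h2
            exact hx.2 ((tr_iff hY hmx).2 h2)
          have hsxX : D.sigma x ∉ X := (tr_iff hX hmx).1 hx.1
          rcases hbmin _ (Finset.mem_sdiff.2 ⟨hsxY, hsxX⟩) with h2 | h2
          · apply hrx
            rw [← h2, rep_sigma hD hmx]
          · rw [prec_congr_right (rep_sigma hD hmx)] at h2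
            exact prec_asymm hD hmx hmb h h2
      right
      rwa [prec_congr_left (rep_sigma hD hmb).symm] at hpre

theorem agree_before {X Y : Finset α} (hX : (levelSucc D).mem X)
    (hY : (levelSucc D).mem Y) (hne : X ≠ Y) {a : α} (ha : a ∈ X)
    (hpre : D.prec a (gammaOf D X Y)) : a ∈ Y := by
  obtain ⟨hbmem, hbmin⟩ := gamma_spec hD hX hY hne
  set b := gammaOf D X Y
  rw [Finset.mem_sdiff] at hbmem
  have hmb : D.mem b := tr_mem hY hbmem.1
  have hma : D.mem a := tr_mem hX ha
  by_contra haY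
  have hsaY : D.sigma a ∈ Y := by
    by_contra h
    exact haY ((tr_iff hY hma).2 h)
  have hsaX : D.sigma a ∉ X := (tr_iff hX hma).1 ha
  rcases hbmin _ (Finset.mem_sdiff.2 ⟨hsaY, hsaX⟩) with h | h
  · exact hpre.1 (by rw [← (rep_sigma hD hma), h])
  · rw [prec_congr_right (rep_sigma hD hma)] at h
    exact prec_asymm hD hma hmb hpre h

theorem agree_before' {X Y : Finset α} (hX : (levelSucc D).mem X)
    (hY : (levelSucc D).mem Y) (hne : X ≠ Y) {a : α} (ha : a ∈ Y)
    (hpre : D.prec a (gammaOf D X Y)) : a ∈ X := by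
  apply agree_before hD hY hX (Ne.symm hne) ha
  rw [gamma_sigma hD hX hY hne]
  rwa [prec_congr_right (rep_sigma hD (tr_mem hY
    (Finset.mem_sdiff.1 (gamma_mem_sdiff hD hX hY hne)).1))]

/-- Lemma 3 at levels `r ≥ 3`. -/
theorem lemma3 {X Y Z : Finset α} (hX : (levelSucc D).mem X)
    (hY : (levelSucc D).mem Y) (hZ : (levelSucc D).mem Z)
    (hXY : X ≠ Y) (hXZ : X ≠ Z) (hYZ : Y ≠ Z) :
    (¬ D.eqv (gammaOf D X Y) (gammaOf D Y Z) →
      (D.prec (gammaOf D X Y) (gammaOf D Y Z) ∧ gammaOf D X Z = gammaOf D X Y) ∨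
      (D.prec (gammaOf D Y Z) (gammaOf D X Y) ∧ gammaOf D X Z = gammaOf D Y Z)) ∧
    (D.eqv (gammaOf D X Y) (gammaOf D Y Z) →
      D.prec (gammaOf D X Y) (gammaOf D X Z) ∧
      D.prec (gammaOf D Y Z) (gammaOf D X Z)) := by
  obtain ⟨hbmem, hbmin⟩ := gamma_spec hD hX hY hXY
  obtain ⟨hcmem, hcmin⟩ := gamma_spec hD hY hZ hYZ
  set b := gammaOf D X Y with hbdef
  set c := gammaOf D Y Z with hcdef
  rw [Finset.mem_sdiff] at hbmem hcmem
  have hmb : D.mem b := tr_mem hY hbmem.1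
  have hmc : D.mem c := tr_mem hZ hcmem.1
  constructor
  · intro hneqv
    have hrep : D.rep b ≠ D.rep c := fun h => hneqv ((rep_eq_iff hD hmb hmc).1 h)
    rcases prec_total hD hmb hmc hrep with hp | hp
    · left
      refine ⟨hp, ?_⟩
      apply gamma_eq hD hX hZ hXZ
      constructor
      · exact Finset.mem_sdiff.2 ⟨agree_before hD hY hZ hYZ hbmem.1 hp, hbmem.2⟩
      · intro x hx
        rw [Finset.mem_sdiff] at hx
        have hmx : D.mem x := tr_mem hZ hx.1
        by_cases hrx : D.rep x = D.rep b
        · exact Or.inl (no_ties hD hZ hx.1 (agree_before hD hY hZ hYZ hbmem.1 hp) hrx)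
        · rcases prec_total hD hmb hmx (fun h => hrx h.symm) with h | h
          · exact Or.inr h
          · exfalso
            have hxc : D.prec x c := prec_trans hD hmx hmb hmc h hp
            have hxY : x ∈ Y := agree_before' hD hY hZ hYZ hx.1 hxc
            have hxX : x ∈ X := agree_before' hD hX hY hXY hxY h
            exact hx.2 hxX
    · right
      refine ⟨hp, ?_⟩
      apply gamma_eq hD hX hZ hXZ
      have hcX : c ∉ X := by
        intro hcX
        have hscY : D.sigma c ∈ Y := by
          by_contra h
          exact hcmem.2 ((tr_iff hY hmc).2 h)
        have hscX : D.sigma c ∉ X := (tr_iff hX hmc).1 hcX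
        rcases hbmin _ (Finset.mem_sdiff.2 ⟨hscY, hscX⟩) with h | h
        · exact hrep (by rw [← h, rep_sigma hD hmc])
        · rw [prec_congr_right (rep_sigma hD hmc)] at h
          exact prec_asymm hD hmc hmb hp h
      constructor
      · exact Finset.mem_sdiff.2 ⟨hcmem.1, hcX⟩
      · intro x hx
        rw [Finset.mem_sdiff] at hx
        have hmx : D.mem x := tr_mem hZ hx.1
        by_cases hrx : D.rep x = D.rep c
        · exact Or.inl (no_ties hD hZ hx.1 hcmem.1 hrx)
        · rcases prec_total hD hmc hmx (fun h => hrx h.symm) with h | h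
          · exact Or.inr h
          · exfalso
            have hxY : x ∈ Y := agree_before' hD hY hZ hYZ hx.1 h
            have hxb : D.prec x b := prec_trans hD hmx hmc hmb h hp
            exact hx.2 (agree_before' hD hX hY hXY hxY hxb)
  · intro heqv
    have hcb : c = D.sigma b := by
      rcases heqv with h | h | h
      · exact absurd hcmem.2 (fun h2 => h2 (h ▸ hbmem.1))
      · rw [h, hD.sigma_sigma c hmc]
      · exact h
    have hrcb : D.rep c = D.rep b := by rw [hcb, rep_sigma hD hmb]
    obtain ⟨hdmem, hdmin⟩ := gamma_spec hD hX hZ hXZ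
    set d := gammaOf D X Z with hddef
    rw [Finset.mem_sdiff] at hdmem
    have hmd : D.mem d := tr_mem hZ hdmem.1
    have hbd : D.prec b d := by
      by_cases hrd : D.rep b = D.rep d
      · exfalso
        have hdc : d = c := no_ties hD hZ hdmem.1 hcmem.1 (by rw [← hrd, hrcb])
        have hs : D.sigma b ∉ X := by rw [← hcb, ← hdc]; exact hdmem.2
        exact hbmem.2 ((tr_iff hX hmb).2 hs)
      · rcases prec_total hD hmb hmd hrd with h | h
        · exact h
        · exfalso
          have hdc : D.prec d c := by
            rw [prec_congr_right hrcb]; exact h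
          have hdY : d ∈ Y := agree_before' hD hY hZ hYZ hdmem.1 hdc
          exact hdmem.2 (agree_before' hD hX hY hXY hdY h)
    exact ⟨hbd, (prec_congr_left hrcb).2 hbd⟩

/-! ## The successor level is good -/

theorem mem_image_sigma {X : Finset α} (hX : (levelSucc D).mem X) {a : α}
    (ha : D.mem a) : a ∈ X.image D.sigma ↔ D.sigma a ∈ X := by
  constructor
  · rintro h
    obtain ⟨x, hx, rfl⟩ := Finset.mem_image.1 h
    rwa [hD.sigma_sigma x (tr_mem hX hx)]
  · intro h
    exact Finset.mem_image.2 ⟨D.sigma a, h, hD.sigma_sigma a ha⟩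

theorem good_succ : Good (levelSucc D) := by
  obtain ⟨U, hU⟩ := hD.finite
  obtain ⟨M, hMmem, hMmin, hMmax⟩ := hD.min_spec
  have hMsmem : D.mem (D.sigma M) := hD.sigma_mem M hMmem
  -- the epsilon in memMinus equals M
  have hemin : Classical.epsilon (fun M' => D.mem M' ∧ ∀ B, D.mem B → B ≠ M' → D.lt M' B) = M := by
    have hsp := Classical.epsilon_spec (p := fun M' => D.mem M' ∧ ∀ B, D.mem B → B ≠ M' → D.lt M' B)
      ⟨M, hMmem, hMmin⟩
    set e := Classical.epsilon (fun M' => D.mem M' ∧ ∀ B, D.mem B → B ≠ M' → D.lt M' B)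
    by_contra hne
    exact hD.lt_asymm _ _ hsp.1 hMmem hne (hsp.2 M hMmem (fun h => hne h.symm))
      (hMmin e hsp.1 hne)
  have hemax : Classical.epsilon (fun M' => D.mem M' ∧ ∀ B, D.mem B → B ≠ M' → D.lt B M') = D.sigma M := by
    have hsp := Classical.epsilon_spec (p := fun M' => D.mem M' ∧ ∀ B, D.mem B → B ≠ M' → D.lt B M')
      ⟨D.sigma M, hMsmem, hMmax⟩
    set e := Classical.epsilon (fun M' => D.mem M' ∧ ∀ B, D.mem B → B ≠ M' → D.lt B M')
    by_contra hne
    exact hD.lt_asymm _ _ hsp.1 hMsmem hne (hMmax e hsp.1 hne)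
      (hsp.2 _ hMsmem (fun h => hne h.symm))
  have hminus : ∀ X : Finset α, (levelSucc D).memMinus X ↔ M ∈ X := by
    intro X
    show Classical.epsilon _ ∈ X ↔ _
    rw [hemin]
  have hplus : ∀ X : Finset α, (levelSucc D).memPlus X ↔ D.sigma M ∈ X := by
    intro X
    show Classical.epsilon _ ∈ X ↔ _
    rw [hemax]
  have hsmem : ∀ X : Finset α, (levelSucc D).mem X → (levelSucc D).mem ((levelSucc D).sigma X) := by
    intro X hX
    constructor
    · intro a ha
      obtain ⟨x, hx, rfl⟩ := Finset.mem_image.1 ha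
      exact hD.sigma_mem x (tr_mem hX hx)
    · intro a ha
      show a ∈ X.image D.sigma ↔ D.sigma a ∉ X.image D.sigma
      rw [mem_image_sigma hD hX ha, mem_image_sigma hD hX (hD.sigma_mem a ha),
        hD.sigma_sigma a ha]
      have h := tr_iff hX ha
      tauto
  refine ⟨hsmem, ?_, ?_, ?_, ?_, ?_, ?_, ?_, ?_, ?_, ?_⟩
  · -- sigma_sigma
    intro X hX
    show (X.image D.sigma).image D.sigma = X
    rw [Finset.image_image]
    rw [show X.image (D.sigma ∘ D.sigma) = X.image id from
      Finset.image_congr (fun x hx => hD.sigma_sigma x (tr_mem hX hx))]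
    exact Finset.image_id
  · -- sigma_ne
    intro X hX h
    have hMX : M ∈ X ∨ D.sigma M ∈ X := by
      by_cases h2 : M ∈ X
      · exact Or.inl h2
      · right; by_contra h3; exact h2 ((tr_iff hX hMmem).2 h3)
    obtain ⟨a, haX, hma⟩ : ∃ a, a ∈ X ∧ D.mem a := by
      rcases hMX with h2 | h2
      · exact ⟨M, h2, hMmem⟩
      · exact ⟨D.sigma M, h2, hMsmem⟩
    have : D.sigma a ∈ X.image D.sigma := Finset.mem_image_of_mem _ haX
    rw [show X.image D.sigma = (levelSucc D).sigma X from rfl, h] at this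
    exact ((tr_iff hX hma).1 haX) this
  · -- minus_iff
    intro X hX
    rw [hminus, hminus]
    show M ∈ X ↔ ¬ M ∈ X.image D.sigma
    rw [mem_image_sigma hD hX hMmem]
    rw [tr_iff hX hMmem]
  · -- plus_iff
    intro X hX
    rw [hplus, hplus]
    show D.sigma M ∈ X ↔ ¬ D.sigma M ∈ X.image D.sigma
    rw [mem_image_sigma hD hX hMsmem, hD.sigma_sigma M hMmem, tr_iff hX hMsmem,
      hD.sigma_sigma M hMmem]
  · -- minus_not_plus
    intro X hX
    rw [hminus, hplus]
    exact tr_iff hX hMmem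
  · -- lt_total
    intro X Y hX hY hne
    have hg := gamma_mem_sdiff hD hX hY hne
    rw [Finset.mem_sdiff] at hg
    have hmg : D.mem (gammaOf D X Y) := tr_mem hY hg.1
    show D.memPlus (gammaOf D X Y) ∨ D.memPlus (gammaOf D Y X)
    rw [gamma_sigma hD hX hY hne]
    by_cases h : D.memPlus (gammaOf D X Y)
    · exact Or.inl h
    · right
      by_contra h2
      exact h ((hD.plus_iff _ hmg).2 h2)
  · -- lt_asymm
    intro X Y hX hY hne h1 h2
    have hg := gamma_mem_sdiff hD hX hY hne
    rw [Finset.mem_sdiff] at hg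
    have hmg : D.mem (gammaOf D X Y) := tr_mem hY hg.1
    rw [show (levelSucc D).lt Y X = D.memPlus (gammaOf D Y X) from rfl,
      gamma_sigma hD hX hY hne] at h2
    exact ((hD.plus_iff _ hmg).1 h1) h2
  · -- lt_trans
    intro X Y Z hX hY hZ hXY hYZ hXZ h1 h2
    have hL3 := lemma3 hD hX hY hZ hXY hXZ hYZ
    have hgb := gamma_mem_sdiff hD hX hY hXY
    have hgc := gamma_mem_sdiff hD hY hZ hYZ
    rw [Finset.mem_sdiff] at hgb hgc
    have hmb : D.mem (gammaOf D X Y) := tr_mem hY hgb.1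
    have hmc : D.mem (gammaOf D Y Z) := tr_mem hZ hgc.1
    have h1' : D.memPlus (gammaOf D X Y) := h1
    have h2' : D.memPlus (gammaOf D Y Z) := h2
    have hneqv : ¬ D.eqv (gammaOf D X Y) (gammaOf D Y Z) := by
      rintro (h | h | h)
      · exact hgc.2 (h ▸ hgb.1)
      · rw [h] at h1'
        exact ((hD.plus_iff _ hmc).1 h2') h1'
      · rw [h] at h2'
        exact ((hD.plus_iff _ hmb).1 h1') h2'
    rcases hL3.1 hneqv with ⟨_, heq⟩ | ⟨_, heq⟩
    · show D.memPlus (gammaOf D X Z)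
      rw [heq]; exact h1'
    · show D.memPlus (gammaOf D X Z)
      rw [heq]; exact h2
  · -- min_spec
    classical
    refine ⟨U.filter (fun a => D.memMinus a), ?_, ?_, ?_⟩
    · constructor
      · intro a ha
        exact (hU a).2 (Finset.mem_filter.1 ha).1
      · intro a ha
        simp only [Finset.mem_filter, ← hU]
        have h1 := hD.minus_iff a ha
        have h2 := hD.sigma_mem a ha
        tauto
    · intro Y hY hne
      have hMin : (levelSucc D).mem (U.filter (fun a => D.memMinus a)) := by
        constructor
        · intro a ha
          exact (hU a).2 (Finset.mem_filter.1 ha).1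
        · intro a ha
          simp only [Finset.mem_filter, ← hU]
          have h1 := hD.minus_iff a ha
          have h2 := hD.sigma_mem a ha
          tauto
      have hg := gamma_mem_sdiff hD hMin hY (fun h => hne h.symm)
      rw [Finset.mem_sdiff] at hg
      have hmg : D.mem (gammaOf D (U.filter (fun a => D.memMinus a)) Y) := tr_mem hY hg.1
      show D.memPlus _
      have : ¬ D.memMinus (gammaOf D (U.filter (fun a => D.memMinus a)) Y) := by
        intro h
        exact hg.2 (Finset.mem_filter.2 ⟨(hU _).1 hmg, h⟩)
      by_contra h2
      exact this ((hD.minus_not_plus _ hmg).2 h2)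
    · intro Y hY hne
      have hMin : (levelSucc D).mem (U.filter (fun a => D.memMinus a)) := by
        constructor
        · intro a ha
          exact (hU a).2 (Finset.mem_filter.1 ha).1
        · intro a ha
          simp only [Finset.mem_filter, ← hU]
          have h1 := hD.minus_iff a ha
          have h2 := hD.sigma_mem a ha
          tauto
      have hMax := hsmem _ hMin
      have hg := gamma_mem_sdiff hD hY hMax hne
      rw [Finset.mem_sdiff] at hg
      show D.memPlus _
      obtain ⟨x, hx, hxe⟩ := Finset.mem_image.1 hg.1
      have hmx : D.mem x := (hU x).2 (Finset.mem_filter.1 hx).1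
      have hminus_x : D.memMinus x := (Finset.mem_filter.1 hx).2
      rw [← hxe]
      have h1 : ¬ D.memMinus (D.sigma x) := (hD.minus_iff x hmx).1 hminus_x
      by_contra h2
      exact h1 ((hD.minus_not_plus _ (hD.sigma_mem x hmx)).2 h2)
  · -- finite
    classical
    refine ⟨U.powerset.filter (fun X => (levelSucc D).mem X), fun X => ?_⟩
    constructor
    · intro hX
      refine Finset.mem_filter.2 ⟨Finset.mem_powerset.2 ?_, hX⟩
      intro a ha
      exact (hU a).1 (tr_mem hX ha)
    · intro hX
      exact (Finset.mem_filter.1 hX).2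

omit hD

/-! ## Level 2 is good -/

theorem mem2_iff (n : ℕ) (p : ℕ × ℕ) :
    (level2 n).mem p ↔ 1 ≤ p.1 ∧ p.1 ≤ 2*n ∧ p.2 = 2*n+1-p.1 := by
  constructor
  · rintro ⟨i, h1, h2, rfl | rfl⟩ <;> simp <;> omega
  · rintro ⟨h1, h2, h3⟩
    by_cases h : p.1 ≤ n
    · exact ⟨p.1, h1, h, Or.inr (by erw [Prod.ext_iff]; simp; omega)⟩
    · exact ⟨p.2, by omega, by omega, Or.inl (by erw [Prod.ext_iff]; simp; omega)⟩

theorem minus2_iff (n : ℕ) (hn : 1 ≤ n) (p : ℕ × ℕ) :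
    (level2 n).memMinus p ↔ n+1 ≤ p.1 ∧ p.1 ≤ 2*n ∧ p.2 = 2*n+1-p.1 := by
  constructor
  · rintro ⟨i, h1, h2, rfl⟩
    simp; omega
  · rintro ⟨h1, h2, h3⟩
    exact ⟨p.2, by omega, by omega, by erw [Prod.ext_iff]; simp; omega⟩

theorem plus2_iff (n : ℕ) (hn : 1 ≤ n) (p : ℕ × ℕ) :
    (level2 n).memPlus p ↔ 1 ≤ p.1 ∧ p.1 ≤ n ∧ p.2 = 2*n+1-p.1 := by
  constructor
  · rintro ⟨i, h1, h2, rfl⟩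
    simp; omega
  · rintro ⟨h1, h2, h3⟩
    exact ⟨p.1, by omega, by omega, by erw [Prod.ext_iff]; simp; omega⟩

theorem fst_inj2 (n : ℕ) {p q : ℕ × ℕ} (hp : (level2 n).mem p)
    (hq : (level2 n).mem q) (h : p.1 = q.1) : p = q := by
  rw [mem2_iff] at hp hq
  rw [Prod.ext_iff]
  omega

theorem good_level2 (n : ℕ) (hn : 1 ≤ n) : Good (level2 n) := by
  have hsig : ∀ p : ℕ × ℕ, (level2 n).sigma p = (p.2, p.1) := fun p => rfl
  have hlt : ∀ p q : ℕ × ℕ, (level2 n).lt p q ↔ q.1 < p.1 := fun p q => Iff.rfl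
  refine ⟨?_, ?_, ?_, ?_, ?_, ?_, ?_, ?_, ?_, ?_, ?_⟩
  · intro p hp
    erw [mem2_iff] at hp
    erw [hsig, mem2_iff]
    dsimp only
    omega
  · intro p hp
    rfl
  · intro p hp h
    erw [mem2_iff] at hp
    erw [hsig, Prod.ext_iff] at h
    simp at h
    omega
  · intro p hp
    erw [mem2_iff] at hp
    erw [minus2_iff n hn, hsig, minus2_iff n hn]
    simp; omega
  · intro p hp
    erw [mem2_iff] at hp
    erw [plus2_iff n hn, hsig, plus2_iff n hn]
    simp; omega
  · intro p hp
    erw [mem2_iff] at hp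
    erw [minus2_iff n hn, plus2_iff n hn]
    omega
  · intro p q hp hq hne
    erw [hlt, hlt]
    have : p.1 ≠ q.1 := fun h => hne (fst_inj2 n hp hq h)
    omega
  · intro p q hp hq hne h1 h2
    erw [hlt] at h1 h2
    omega
  · intro p q r hp hq hr h1 h2 h3 h4 h5
    erw [hlt] at h4 h5 ⊢
    omega
  · refine ⟨(2*n, 1), ?_, ?_, ?_⟩
    · rw [mem2_iff]; simp; omega
    · intro B hB hne
      erw [mem2_iff] at hB
      erw [hlt]
      simp only
      have : B.1 ≠ 2*n := by
        intro h
        exact hne (fst_inj2 n (by erw [mem2_iff]; exact hB) (by rw [mem2_iff]; simp; omega) h)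
      omega
    · intro B hB hne
      erw [mem2_iff] at hB
      erw [hlt]
      have hs : (level2 n).sigma (2*n, 1) = (1, 2*n) := rfl
      rw [hs] at hne ⊢
      simp only
      have : B.1 ≠ 1 := by
        intro h
        exact hne (fst_inj2 n (by erw [mem2_iff]; exact hB) (by rw [mem2_iff]; simp; omega) h)
      omega
  · refine ⟨(Finset.Icc 1 (2*n)).image (fun i => (i, 2*n+1-i)), fun (p : ℕ × ℕ) => ?_⟩
    show (level2 n).mem p ↔ p ∈ ((Finset.Icc 1 (2*n)).image (fun i => (i, 2*n+1-i)) : Finset (ℕ × ℕ))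
    erw [mem2_iff]
    simp only [Finset.mem_image, Finset.mem_Icc]
    constructor
    · rintro ⟨h1, h2, h3⟩
      exact ⟨p.1, ⟨h1, h2⟩, by rw [Prod.ext_iff]; simp; omega⟩
    · rintro ⟨i, ⟨h1, h2⟩, rfl⟩
      simp; omega

/-- All levels of the construction are good. -/
theorem goodL (n : ℕ) (hn : 1 ≤ n) : ∀ k : ℕ, Good (L n (k + 2))
  | 0 => good_level2 n hn
  | (k + 1) => good_succ (goodL n hn k)

end GammaDel

/-- Lemma 3 (deletion): for pairwise distinct `A, B, C ∈ F_r(n)`. For `r ≥ 3` (written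
`r = k + 3`): if `γ(A,B) ≢_{r-1} γ(B,C)` then `γ(A,C)` is the `≺_{r-1}`-minimum of
`γ(A,B)` and `γ(B,C)`, and if `γ(A,B) ≡_{r-1} γ(B,C)` then both `γ(A,B) ≺_{r-1} γ(A,C)`
and `γ(B,C) ≺_{r-1} γ(A,C)`. For `r = 2`: if `γ(A,B) ≠ γ(B,C)` then
`γ(A,C) ∈ {γ(A,B), γ(B,C)}`, and otherwise `γ(A,C) = γ(A,B) = γ(B,C)`. -/
theorem gamma_deletion (n : ℕ) (hn : 1 ≤ n) :
    (∀ k : ℕ, ∀ A B C : FT (k + 3),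
      memF n (k + 3) A → memF n (k + 3) B → memF n (k + 3) C →
      A ≠ B → A ≠ C → B ≠ C →
      (¬ (L n (k + 2)).eqv (gam n (k + 1) A B) (gam n (k + 1) B C) →
        (((L n (k + 2)).prec (gam n (k + 1) A B) (gam n (k + 1) B C) ∧
            gam n (k + 1) A C = gam n (k + 1) A B) ∨
         ((L n (k + 2)).prec (gam n (k + 1) B C) (gam n (k + 1) A B) ∧
            gam n (k + 1) A C = gam n (k + 1) B C))) ∧
      ((L n (k + 2)).eqv (gam n (k + 1) A B) (gam n (k + 1) B C) →
        (L n (k + 2)).prec (gam n (k + 1) A B) (gam n (k + 1) A C) ∧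
        (L n (k + 2)).prec (gam n (k + 1) B C) (gam n (k + 1) A C))) ∧
    (∀ A B C : FT 2,
      memF n 2 A → memF n 2 B → memF n 2 C →
      A ≠ B → A ≠ C → B ≠ C →
      (gam n 0 A B ≠ gam n 0 B C →
        (gam n 0 A C = gam n 0 A B ∨ gam n 0 A C = gam n 0 B C)) ∧
      (gam n 0 A B = gam n 0 B C →
        gam n 0 A C = gam n 0 A B ∧ gam n 0 A C = gam n 0 B C)) := by
  constructor
  · intro k A B C hA hB hC hAB hAC hBC
    exact GammaDel.lemma3 (GammaDel.goodL n hn k) hA hB hC hAB hAC hBC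
  · intro A B C hA hB hC hAB hAC hBC
    have h1 : A.1 ≠ B.1 := fun h => hAB (GammaDel.fst_inj2 n hA hB h)
    have h2 : A.1 ≠ C.1 := fun h => hAC (GammaDel.fst_inj2 n hA hC h)
    have h3 : B.1 ≠ C.1 := fun h => hBC (GammaDel.fst_inj2 n hB hC h)
    have key : ∀ (p q : Prop) (dp : Decidable p) (dq : Decidable q),
        (@Eq (FT 1) (decide p) (decide q)) = (p ↔ q) := by
      intro p q dp dq
      exact propext decide_eq_decide
    simp only [gam, ne_eq, key]
    omega
end

section
/- Fix an integer n ≥ 1 and an integer r ≥ 2, and let A, B, A', B' be elements of F_r(n) with A ≠ B. (i) If A' ≠ B and A ≤_r A', then γ(A,B) ≥_{r-1} γ(A',B). (ii) If A ≠ B' and B ≤_r B', then γ(A,B) ≤_{r-1} γ(A,B'). Here ≤_{r-1} denotes the order <_{r-1} on F_{r-1}(n) (for r = 2, the order - <_1 +) together with equality. -/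
open scoped Classical

/-!
Identifying each `≡`-class with its minus element, an element of `F_r(n)` is a sign vector
indexed by the classes of level `r - 1`, ordered by `≺`, and `<_r` is the lexicographic order
of these sign vectors with `- < +`; `γ(A, B)` records the first class where `A` and `B` differ
together with the sign chosen by `B`. The first-difference class behaves like an ultrametric:
of the three classes attached to three elements, the two smallest coincide, and replacement is
a case analysis on these classes. This needs each level to be a finite linear order with an
order-reversing fixed-point-free involution exchanging minus and plus elements, all minus
elements below all plus ones; level 2 is of this kind and the construction preserves it.
-/
theorem Finset.exists_forall_not_rel {β : Type*} (s : Finset β) (hs : s.Nonempty)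
    (r : β → β → Prop) (irrefl : ∀ a ∈ s, ¬ r a a)
    (trans : ∀ a ∈ s, ∀ b ∈ s, ∀ c ∈ s, r a b → r b c → r a c) :
    ∃ m ∈ s, ∀ a ∈ s, ¬ r a m := by
  let r' : s → s → Prop := fun a b => r a b
  have : IsTrans s r' := ⟨fun a b c => trans a a.2 b b.2 c c.2⟩
  have : Std.Irrefl r' := ⟨fun a => irrefl a a.2⟩
  obtain ⟨⟨m, hm⟩, -, hmin⟩ := (Finite.wellFounded_of_trans_of_irrefl r').has_min Set.univ
    ⟨⟨_, hs.choose_spec⟩, trivial⟩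
  exact ⟨m, hm, fun a ha => hmin ⟨a, ha⟩ trivial⟩

namespace LevelData

variable {α : Type}

structure IsAdmissible (D : LevelData α) : Prop where
  finite_mem : {a | D.mem a}.Finite
  exists_mem : ∃ a, D.mem a
  sigma_mem {a} : D.mem a → D.mem (D.sigma a)
  sigma_sigma {a} : D.mem a → D.sigma (D.sigma a) = a
  sigma_ne {a} : D.mem a → D.sigma a ≠ a
  memMinus_iff_not_memPlus {a} : D.mem a → (D.memMinus a ↔ ¬ D.memPlus a)
  memMinus_iff_memPlus_sigma {a} : D.mem a → (D.memMinus a ↔ D.memPlus (D.sigma a))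
  lt_asymm {a b} : D.mem a → D.mem b → a ≠ b → D.lt a b → ¬ D.lt b a
  lt_or_lt {a b} : D.mem a → D.mem b → a ≠ b → D.lt a b ∨ D.lt b a
  lt_trans {a b c} : D.mem a → D.mem b → D.mem c → D.lt a b → D.lt b c → D.lt a c
  lt_of_memMinus_of_memPlus {a b} :
    D.mem a → D.mem b → D.memMinus a → D.memPlus b → D.lt a b
  lt_iff_lt_sigma {a b} :
    D.mem a → D.mem b → a ≠ b → (D.lt a b ↔ D.lt (D.sigma b) (D.sigma a))

/- `(levelSucc D).mem X`, `(levelSucc D).memMinus X` and `(levelSucc D).memPlus X` unfold to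
`D.IsTransversal X`, `D.minElt ∈ X` and `D.maxElt ∈ X`. -/
def IsTransversal (D : LevelData α) (X : Finset α) : Prop :=
  (∀ a ∈ X, D.mem a) ∧ ∀ a, D.mem a → (a ∈ X ↔ D.sigma a ∉ X)

noncomputable def minElt [Nonempty α] (D : LevelData α) : α :=
  Classical.epsilon (fun M => D.mem M ∧ ∀ B, D.mem B → B ≠ M → D.lt M B)

noncomputable def maxElt [Nonempty α] (D : LevelData α) : α :=
  Classical.epsilon (fun M => D.mem M ∧ ∀ B, D.mem B → B ≠ M → D.lt B M)

theorem prec_irrefl (D : LevelData α) (a : α) : ¬ D.prec a a := fun h => h.1 rfl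

variable {D : LevelData α} {a b c : α} {X Y Z : Finset α}

namespace IsAdmissible

theorem memPlus_of_not_memMinus (hD : D.IsAdmissible) (ha : D.mem a) (h : ¬ D.memMinus a) :
    D.memPlus a := by
  have := hD.memMinus_iff_not_memPlus ha; tauto

theorem memMinus_sigma_iff (hD : D.IsAdmissible) (ha : D.mem a) :
    D.memMinus (D.sigma a) ↔ D.memPlus a := by
  simpa only [hD.sigma_sigma ha] using hD.memMinus_iff_memPlus_sigma (hD.sigma_mem ha)

theorem eq_of_sigma_eq (hD : D.IsAdmissible) (ha : D.mem a) (hb : D.mem b)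
    (h : D.sigma a = D.sigma b) : a = b := by
  rw [← hD.sigma_sigma ha, h, hD.sigma_sigma hb]

theorem rep_of_memPlus (hD : D.IsAdmissible) (ha : D.mem a) (h : D.memPlus a) :
    D.rep a = D.sigma a :=
  if_neg ((hD.memMinus_iff_not_memPlus ha).not.mpr (not_not.mpr h))

theorem rep_mem (hD : D.IsAdmissible) (ha : D.mem a) : D.mem (D.rep a) := by
  unfold LevelData.rep
  split_ifs
  exacts [ha, hD.sigma_mem ha]

theorem rep_sigma (hD : D.IsAdmissible) (ha : D.mem a) : D.rep (D.sigma a) = D.rep a := by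
  by_cases hm : D.memMinus a
  · rw [hD.rep_of_memPlus (hD.sigma_mem ha) ((hD.memMinus_iff_memPlus_sigma ha).mp hm),
      hD.sigma_sigma ha, LevelData.rep, if_pos hm]
  · rw [LevelData.rep, if_pos ((hD.memMinus_sigma_iff ha).mpr
      (hD.memPlus_of_not_memMinus ha hm)), LevelData.rep, if_neg hm]

theorem eq_or_eq_sigma_of_rep_eq (hD : D.IsAdmissible) (ha : D.mem a) (hb : D.mem b)
    (h : D.rep a = D.rep b) : b = a ∨ b = D.sigma a := by
  unfold LevelData.rep at h
  split_ifs at h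
  · exact Or.inl h.symm
  · exact Or.inr (by rw [h, hD.sigma_sigma hb])
  · exact Or.inr h.symm
  · exact Or.inl (hD.eq_of_sigma_eq hb ha h.symm)

theorem prec_asymm (hD : D.IsAdmissible) (ha : D.mem a) (hb : D.mem b) (h : D.prec a b) :
    ¬ D.prec b a := fun h' =>
  hD.lt_asymm (hD.rep_mem ha) (hD.rep_mem hb) h.1 h.2 h'.2

theorem prec_trans (hD : D.IsAdmissible) (ha : D.mem a) (hb : D.mem b) (hc : D.mem c)
    (hab : D.prec a b) (hbc : D.prec b c) : D.prec a c := by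
  refine ⟨fun he => ?_, hD.lt_trans (hD.rep_mem ha) (hD.rep_mem hb) (hD.rep_mem hc) hab.2 hbc.2⟩
  exact hD.lt_asymm (hD.rep_mem hb) (hD.rep_mem hc) hbc.1 hbc.2 (he ▸ hab.2)

theorem prec_trichotomy (hD : D.IsAdmissible) (ha : D.mem a) (hb : D.mem b) :
    D.prec a b ∨ D.prec b a ∨ D.rep a = D.rep b := by
  by_cases h : D.rep a = D.rep b
  · exact Or.inr (Or.inr h)
  rcases hD.lt_or_lt (hD.rep_mem ha) (hD.rep_mem hb) h with h' | h'
  exacts [Or.inl ⟨h, h'⟩, Or.inr (Or.inl ⟨Ne.symm h, h'⟩)]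

theorem prec_sigma_left (hD : D.IsAdmissible) (ha : D.mem a) :
    D.prec (D.sigma a) b ↔ D.prec a b := by
  simp only [LevelData.prec, hD.rep_sigma ha]

theorem prec_sigma_right (hD : D.IsAdmissible) (hb : D.mem b) :
    D.prec a (D.sigma b) ↔ D.prec a b := by
  simp only [LevelData.prec, hD.rep_sigma hb]

theorem lt_of_prec_of_memMinus (hD : D.IsAdmissible) (ha : D.mem a) (hb : D.mem b)
    (h : D.prec a b) (hm : D.memMinus a) : D.lt a b := by
  by_cases hbm : D.memMinus b
  · simpa only [LevelData.prec, LevelData.rep, if_pos hm, if_pos hbm] using h.2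
  · exact hD.lt_of_memMinus_of_memPlus ha hb hm (hD.memPlus_of_not_memMinus hb hbm)

theorem lt_of_prec_of_memPlus (hD : D.IsAdmissible) (ha : D.mem a) (hb : D.mem b)
    (h : D.prec a b) (hp : D.memPlus a) : D.lt b a := by
  by_cases hbm : D.memMinus b
  · exact hD.lt_of_memMinus_of_memPlus hb ha hbm hp
  have hne : b ≠ a := fun hba => h.1 (hba ▸ rfl)
  have h' := h.2
  rw [hD.rep_of_memPlus ha hp, hD.rep_of_memPlus hb (hD.memPlus_of_not_memMinus hb hbm)] at h'
  exact (hD.lt_iff_lt_sigma hb ha hne).mpr h'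

end IsAdmissible

namespace IsTransversal

theorem mem_of_mem (hX : D.IsTransversal X) (ha : a ∈ X) : D.mem a := hX.1 a ha

theorem sigma_notMem (hX : D.IsTransversal X) (ha : a ∈ X) : D.sigma a ∉ X :=
  (hX.2 a (hX.mem_of_mem ha)).mp ha

theorem sigma_mem (hX : D.IsTransversal X) (ha : D.mem a) (haX : a ∉ X) : D.sigma a ∈ X := by
  have := hX.2 a ha; tauto

theorem eq_of_rep_eq (hX : D.IsTransversal X) (hD : D.IsAdmissible) (ha : a ∈ X) (hb : b ∈ X)
    (h : D.rep a = D.rep b) : a = b := by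
  rcases hD.eq_or_eq_sigma_of_rep_eq (hX.mem_of_mem ha) (hX.mem_of_mem hb) h with rfl | rfl
  exacts [rfl, absurd hb (hX.sigma_notMem ha)]

theorem eq_sigma_of_rep_eq (hX : D.IsTransversal X) (hD : D.IsAdmissible) (ha : a ∈ X)
    (hb : D.mem b) (hbX : b ∉ X) (h : D.rep a = D.rep b) : b = D.sigma a := by
  rcases hD.eq_or_eq_sigma_of_rep_eq (hX.mem_of_mem ha) hb h with rfl | rfl
  exacts [absurd ha hbX, rfl]

theorem sdiff_nonempty [DecidableEq α] (hX : D.IsTransversal X) (hY : D.IsTransversal Y)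
    (h : X ≠ Y) :
    (Y \ X).Nonempty := by
  rw [Finset.sdiff_nonempty]
  refine fun hYX => h (Finset.Subset.antisymm (fun a ha => ?_) hYX)
  by_contra haY
  exact hX.sigma_notMem ha (hYX (hY.sigma_mem (hX.mem_of_mem ha) haY))

end IsTransversal

namespace IsAdmissible

section gammaOf

variable [DecidableEq α] [Nonempty α] (hD : D.IsAdmissible) (hX : D.IsTransversal X)
  (hY : D.IsTransversal Y) (hZ : D.IsTransversal Z)
include hD hX hY

theorem gammaOf_spec (hXY : X ≠ Y) :
    gammaOf D X Y ∈ Y \ X ∧ ∀ y ∈ Y, D.prec y (gammaOf D X Y) → y ∈ X := by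
  have hmem : ∀ y ∈ Y \ X, D.mem y := fun y hy => hY.mem_of_mem (Finset.mem_sdiff.mp hy).1
  obtain ⟨m, hm, hmin⟩ := (Y \ X).exists_forall_not_rel (hX.sdiff_nonempty hY hXY) D.prec
    (fun a _ => D.prec_irrefl a)
    (fun a ha b hb c hc => hD.prec_trans (hmem a ha) (hmem b hb) (hmem c hc))
  have hfirst : ∀ y ∈ Y \ X, y = m ∨ D.prec m y := fun y hy => by
    rcases hD.prec_trichotomy (hmem m hm) (hmem y hy) with h | h | h
    · exact Or.inr h
    · exact absurd h (hmin y hy)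
    · exact Or.inl <|
        (hY.eq_of_rep_eq hD (Finset.mem_sdiff.mp hm).1 (Finset.mem_sdiff.mp hy).1 h).symm
  obtain ⟨hg, hgmin⟩ := Classical.epsilon_spec
    (p := fun g => g ∈ Y \ X ∧ ∀ y ∈ Y \ X, y = g ∨ D.prec g y) ⟨m, hm, hfirst⟩
  refine ⟨hg, fun y hy hprec => ?_⟩
  by_contra hyX
  rcases hgmin y (Finset.mem_sdiff.mpr ⟨hy, hyX⟩) with rfl | h
  exacts [D.prec_irrefl _ hprec, hD.prec_asymm (hY.mem_of_mem hy) (hmem _ hg) hprec h]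

theorem gammaOf_mem (hXY : X ≠ Y) : gammaOf D X Y ∈ Y :=
  (Finset.mem_sdiff.mp (hD.gammaOf_spec hX hY hXY).1).1

theorem gammaOf_notMem (hXY : X ≠ Y) : gammaOf D X Y ∉ X :=
  (Finset.mem_sdiff.mp (hD.gammaOf_spec hX hY hXY).1).2

theorem mem_gammaOf (hXY : X ≠ Y) : D.mem (gammaOf D X Y) :=
  hY.mem_of_mem (hD.gammaOf_mem hX hY hXY)

theorem mem_left_of_prec_gammaOf (hXY : X ≠ Y) (hb : b ∈ Y) (h : D.prec b (gammaOf D X Y)) :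
    b ∈ X :=
  (hD.gammaOf_spec hX hY hXY).2 b hb h

theorem mem_right_of_prec_gammaOf (hXY : X ≠ Y) (ha : a ∈ X) (h : D.prec a (gammaOf D X Y)) :
    a ∈ Y := by
  by_contra haY
  have hsa := hY.sigma_mem (hX.mem_of_mem ha) haY
  refine hX.sigma_notMem ha (hD.mem_left_of_prec_gammaOf hX hY hXY hsa ?_)
  exact (hD.prec_sigma_left (hX.mem_of_mem ha)).mpr h

theorem gammaOf_eq_of_forall_prec (hXY : X ≠ Y) (hbY : b ∈ Y) (hbX : b ∉ X)
    (h : ∀ y ∈ Y, D.prec y b → y ∈ X) : gammaOf D X Y = b := by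
  have hg := hD.gammaOf_mem hX hY hXY
  rcases hD.prec_trichotomy (hY.mem_of_mem hg) (hY.mem_of_mem hbY) with h' | h' | h'
  · exact absurd (h _ hg h') (hD.gammaOf_notMem hX hY hXY)
  · exact absurd (hD.mem_left_of_prec_gammaOf hX hY hXY hbY h') hbX
  · exact hY.eq_of_rep_eq hD hg hbY h'

theorem gammaOf_swap (hXY : X ≠ Y) : gammaOf D Y X = D.sigma (gammaOf D X Y) := by
  have hg := hD.mem_gammaOf hX hY hXY
  refine hD.gammaOf_eq_of_forall_prec hY hX hXY.symm
    (hX.sigma_mem hg (hD.gammaOf_notMem hX hY hXY))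
    (hY.sigma_notMem (hD.gammaOf_mem hX hY hXY)) fun x hx h => ?_
  exact hD.mem_right_of_prec_gammaOf hX hY hXY hx ((hD.prec_sigma_right hg).mp h)

include hZ

theorem gammaOf_eq_left_of_prec (hXY : X ≠ Y) (hYZ : Y ≠ Z) (hXZ : X ≠ Z)
    (h : D.prec (gammaOf D X Y) (gammaOf D Y Z)) : gammaOf D X Z = gammaOf D X Y := by
  have hg := hD.mem_gammaOf hX hY hXY
  refine hD.gammaOf_eq_of_forall_prec hX hZ hXZ
    (hD.mem_right_of_prec_gammaOf hY hZ hYZ (hD.gammaOf_mem hX hY hXY) h)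
    (hD.gammaOf_notMem hX hY hXY) fun z hz hzg => ?_
  have hzY := hD.mem_left_of_prec_gammaOf hY hZ hYZ hz
    (hD.prec_trans (hZ.mem_of_mem hz) hg (hD.mem_gammaOf hY hZ hYZ) hzg h)
  exact hD.mem_left_of_prec_gammaOf hX hY hXY hzY hzg

theorem gammaOf_eq_right_of_prec (hXY : X ≠ Y) (hYZ : Y ≠ Z) (hXZ : X ≠ Z)
    (h : D.prec (gammaOf D Y Z) (gammaOf D X Y)) : gammaOf D X Z = gammaOf D Y Z := by
  have hg := hD.mem_gammaOf hY hZ hYZ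
  refine hD.gammaOf_eq_of_forall_prec hX hZ hXZ (hD.gammaOf_mem hY hZ hYZ)
    (fun hgX => hD.gammaOf_notMem hY hZ hYZ
      (hD.mem_right_of_prec_gammaOf hX hY hXY hgX h)) fun z hz hzg => ?_
  have hzY := hD.mem_left_of_prec_gammaOf hY hZ hYZ hz hzg
  exact hD.mem_left_of_prec_gammaOf hX hY hXY hzY
    (hD.prec_trans (hZ.mem_of_mem hz) hg (hD.mem_gammaOf hX hY hXY) hzg h)

end gammaOf

theorem minElt_spec [Nonempty α] (hD : D.IsAdmissible) :
    D.mem D.minElt ∧ ∀ b, D.mem b → b ≠ D.minElt → D.lt D.minElt b := by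
  obtain ⟨a, ha⟩ := hD.exists_mem
  have hmem : ∀ b ∈ hD.finite_mem.toFinset, D.mem b := fun _ => hD.finite_mem.mem_toFinset.mp
  obtain ⟨m, hm, hmin⟩ := hD.finite_mem.toFinset.exists_forall_not_rel
    ⟨a, hD.finite_mem.mem_toFinset.mpr ha⟩ (fun a b => a ≠ b ∧ D.lt a b)
    (fun _ _ h => h.1 rfl)
    fun a ha b hb c hc hab hbc => ⟨fun hac => hD.lt_asymm (hmem a ha) (hmem b hb) hab.1 hab.2
      (hac ▸ hbc.2), hD.lt_trans (hmem a ha) (hmem b hb) (hmem c hc) hab.2 hbc.2⟩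
  refine Classical.epsilon_spec (p := fun M => D.mem M ∧ ∀ B, D.mem B → B ≠ M → D.lt M B)
    ⟨m, hmem m hm, fun b hb hbm => ?_⟩
  refine (hD.lt_or_lt (hmem m hm) hb (Ne.symm hbm)).resolve_right fun h => ?_
  exact hmin b (hD.finite_mem.mem_toFinset.mpr hb) ⟨hbm, h⟩

theorem memMinus_minElt [Nonempty α] (hD : D.IsAdmissible) : D.memMinus D.minElt := by
  obtain ⟨hm, hmin⟩ := hD.minElt_spec
  by_contra h
  have hp := hD.memPlus_of_not_memMinus hm h
  refine hD.lt_asymm hm (hD.sigma_mem hm) (hD.sigma_ne hm).symm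
    (hmin _ (hD.sigma_mem hm) (hD.sigma_ne hm)) ?_
  exact hD.lt_of_memMinus_of_memPlus (hD.sigma_mem hm) hm ((hD.memMinus_sigma_iff hm).mpr hp) hp

theorem maxElt_eq [Nonempty α] (hD : D.IsAdmissible) : D.maxElt = D.sigma D.minElt := by
  obtain ⟨hm, hmin⟩ := hD.minElt_spec
  have hsm := hD.sigma_mem hm
  have hmax : ∀ b, D.mem b → b ≠ D.sigma D.minElt → D.lt b (D.sigma D.minElt) := by
    intro b hb hbm
    have := hD.lt_iff_lt_sigma hb hsm hbm
    rw [hD.sigma_sigma hm] at this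
    exact this.mpr (hmin _ (hD.sigma_mem hb) fun h => hbm (by rw [← h, hD.sigma_sigma hb]))
  obtain ⟨hM, hMmax⟩ := Classical.epsilon_spec
    (p := fun M => D.mem M ∧ ∀ B, D.mem B → B ≠ M → D.lt B M) ⟨_, hsm, hmax⟩
  by_contra hne
  exact hD.lt_asymm hM hsm hne (hmax _ hM hne) (hMmax _ hsm (Ne.symm hne))

theorem exists_isTransversal (hD : D.IsAdmissible) : ∃ X, D.IsTransversal X := by
  refine ⟨hD.finite_mem.toFinset.filter D.memMinus, fun a ha => ?_, fun a ha => ?_⟩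
  · exact hD.finite_mem.mem_toFinset.mp (Finset.mem_filter.mp ha).1
  · simp only [Finset.mem_filter, Set.Finite.mem_toFinset, Set.mem_ofPred_eq, ha,
      hD.sigma_mem ha, true_and, hD.memMinus_sigma_iff ha, hD.memMinus_iff_not_memPlus ha]

theorem finite_setOf_isTransversal (hD : D.IsAdmissible) : {X | D.IsTransversal X}.Finite :=
  hD.finite_mem.toFinset.powerset.finite_toSet.subset fun _ hX =>
    Finset.mem_powerset.mpr fun a ha => hD.finite_mem.mem_toFinset.mpr (hX.1 a ha)

section image

variable [DecidableEq α] (hD : D.IsAdmissible) (hX : D.IsTransversal X)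
include hD hX

theorem mem_image_sigma_iff (ha : D.mem a) : a ∈ X.image D.sigma ↔ D.sigma a ∈ X := by
  refine ⟨fun h => ?_, fun h => Finset.mem_image.mpr ⟨_, h, hD.sigma_sigma ha⟩⟩
  obtain ⟨b, hb, rfl⟩ := Finset.mem_image.mp h
  rwa [hD.sigma_sigma (hX.mem_of_mem hb)]

theorem isTransversal_image_sigma : D.IsTransversal (X.image D.sigma) := by
  refine ⟨fun a ha => ?_, fun a ha => ?_⟩
  · obtain ⟨b, hb, rfl⟩ := Finset.mem_image.mp ha
    exact hD.sigma_mem (hX.mem_of_mem hb)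
  · rw [hD.mem_image_sigma_iff hX ha, hD.mem_image_sigma_iff hX (hD.sigma_mem ha),
      hD.sigma_sigma ha]
    have := hX.2 a ha
    tauto

theorem image_sigma_image_sigma : (X.image D.sigma).image D.sigma = X := by
  rw [Finset.image_image]
  exact (Finset.image_congr fun a ha => hD.sigma_sigma (hX.mem_of_mem ha)).trans X.image_id

theorem image_sigma_ne : X.image D.sigma ≠ X := by
  obtain ⟨a, ha⟩ := hD.exists_mem
  by_cases haX : a ∈ X
  · exact fun h => hX.sigma_notMem haX (h ▸ Finset.mem_image_of_mem D.sigma haX)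
  · exact fun h => haX (h ▸ (hD.mem_image_sigma_iff hX ha).mpr (hX.sigma_mem ha haX))

end image

section levelSucc

variable [DecidableEq α] [Nonempty α] (hD : D.IsAdmissible) (hX : D.IsTransversal X)
  (hY : D.IsTransversal Y)
include hD hX hY

theorem memPlus_gammaOf_swap_iff (hXY : X ≠ Y) :
    D.memPlus (gammaOf D Y X) ↔ ¬ D.memPlus (gammaOf D X Y) := by
  have hg := hD.mem_gammaOf hX hY hXY
  rw [hD.gammaOf_swap hX hY hXY, ← hD.memMinus_iff_memPlus_sigma hg,
    hD.memMinus_iff_not_memPlus hg]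

theorem gammaOf_eq_maxElt (hmin : D.minElt ∈ X) (hmax : D.maxElt ∈ Y) :
    gammaOf D X Y = D.maxElt := by
  obtain ⟨hm, hlt⟩ := hD.minElt_spec
  have hmaxX : D.maxElt ∉ X := hD.maxElt_eq ▸ hX.sigma_notMem hmin
  have hrep : D.rep D.maxElt = D.minElt := by
    rw [hD.maxElt_eq, hD.rep_sigma hm, LevelData.rep, if_pos hD.memMinus_minElt]
  refine hD.gammaOf_eq_of_forall_prec hX hY (fun h => hmaxX (h ▸ hmax)) hmax hmaxX
    fun y hy ⟨hne, hlt'⟩ => ?_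
  rw [hrep] at hne hlt'
  have hy' := hD.rep_mem (hY.mem_of_mem hy)
  exact absurd (hlt _ hy' hne) (hD.lt_asymm hy' hm hne hlt')

theorem gammaOf_image_sigma (hXY : X ≠ Y) :
    gammaOf D (Y.image D.sigma) (X.image D.sigma) = gammaOf D X Y := by
  have hg := hD.mem_gammaOf hX hY hXY
  refine hD.gammaOf_eq_of_forall_prec (hD.isTransversal_image_sigma hY)
    (hD.isTransversal_image_sigma hX) (fun h => hXY ?_)
    ((hD.mem_image_sigma_iff hX hg).mpr (hX.sigma_mem hg (hD.gammaOf_notMem hX hY hXY)))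
    (fun h => hY.sigma_notMem (hD.gammaOf_mem hX hY hXY) ((hD.mem_image_sigma_iff hY hg).mp h))
    fun w hw h => ?_
  · rw [← hD.image_sigma_image_sigma hX, ← h, hD.image_sigma_image_sigma hY]
  have hw' := (hD.isTransversal_image_sigma hX).mem_of_mem hw
  refine (hD.mem_image_sigma_iff hY hw').mpr (hD.mem_right_of_prec_gammaOf hX hY hXY
    ((hD.mem_image_sigma_iff hX hw').mp hw) ?_)
  exact (hD.prec_sigma_left hw').mpr h

variable (hZ : D.IsTransversal Z)
include hZ

theorem memPlus_gammaOf_trans (hXY : D.memPlus (gammaOf D X Y))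
    (hYZ : D.memPlus (gammaOf D Y Z)) : D.memPlus (gammaOf D X Z) := by
  by_cases hXY' : X = Y
  · rwa [hXY']
  by_cases hYZ' : Y = Z
  · rwa [← hYZ']
  by_cases hXZ' : X = Z
  · subst hXZ'
    exact absurd hXY ((hD.memPlus_gammaOf_swap_iff hX hY hXY').mp hYZ)
  have hg := hD.mem_gammaOf hX hY hXY'
  have hg' := hD.mem_gammaOf hY hZ hYZ'
  rcases hD.prec_trichotomy hg hg' with h | h | h
  · rwa [hD.gammaOf_eq_left_of_prec hX hY hZ hXY' hYZ' hXZ' h]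
  · rwa [hD.gammaOf_eq_right_of_prec hX hY hZ hXY' hYZ' hXZ' h]
  · have := hY.eq_sigma_of_rep_eq hD (hD.gammaOf_mem hX hY hXY') hg'
      (hD.gammaOf_notMem hY hZ hYZ') h
    rw [this, ← hD.memMinus_iff_memPlus_sigma hg, hD.memMinus_iff_not_memPlus hg] at hYZ
    exact absurd hXY hYZ

end levelSucc

end IsAdmissible

theorem isAdmissible_levelSucc [DecidableEq α] [Nonempty α] (hD : D.IsAdmissible) :
    (levelSucc D).IsAdmissible where
  finite_mem := hD.finite_setOf_isTransversal
  exists_mem := hD.exists_isTransversal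
  sigma_mem hX := hD.isTransversal_image_sigma hX
  sigma_sigma hX := hD.image_sigma_image_sigma hX
  sigma_ne hX := hD.image_sigma_ne hX
  memMinus_iff_not_memPlus {X} hX := by
    show D.minElt ∈ X ↔ D.maxElt ∉ X
    rw [hD.maxElt_eq]
    exact hX.2 _ hD.minElt_spec.1
  memMinus_iff_memPlus_sigma {X} hX := by
    show D.minElt ∈ X ↔ D.maxElt ∈ X.image D.sigma
    rw [hD.mem_image_sigma_iff hX (hD.maxElt_eq ▸ hD.sigma_mem hD.minElt_spec.1), hD.maxElt_eq,
      hD.sigma_sigma hD.minElt_spec.1]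
  lt_asymm hX hY hXY h := fun h' => (hD.memPlus_gammaOf_swap_iff hX hY hXY).mp h' h
  lt_or_lt hX hY hXY := (em _).imp_right (hD.memPlus_gammaOf_swap_iff hX hY hXY).mpr
  lt_trans hX hY hZ := hD.memPlus_gammaOf_trans hX hY hZ
  lt_of_memMinus_of_memPlus hX hY hmin hmax := by
    show D.memPlus (gammaOf D _ _)
    rw [hD.gammaOf_eq_maxElt hX hY hmin hmax, hD.maxElt_eq,
      ← hD.memMinus_iff_memPlus_sigma hD.minElt_spec.1]
    exact hD.memMinus_minElt
  lt_iff_lt_sigma {X Y} hX hY hXY := by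
    show D.memPlus (gammaOf D X Y) ↔ D.memPlus (gammaOf D (Y.image D.sigma) (X.image D.sigma))
    rw [hD.gammaOf_image_sigma hX hY hXY]

namespace IsAdmissible

variable [DecidableEq α] [Nonempty α] {A B A' B' : Finset α}
  (hD : D.IsAdmissible) (hA : D.IsTransversal A) (hB : D.IsTransversal B)
include hD hA hB

theorem gammaOf_replacement_of_memPlus (hA' : D.IsTransversal A') (hAB : A ≠ B)
    (hA'B : A' ≠ B) (hAA' : A ≠ A') (hplus : D.memPlus (gammaOf D A A')) :
    D.lt (gammaOf D A' B) (gammaOf D A B) ∨ gammaOf D A' B = gammaOf D A B := by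
  have ht := hD.mem_gammaOf hA hA' hAA'
  have hg := hD.mem_gammaOf hA hB hAB
  have hg' := hD.mem_gammaOf hA' hB hA'B
  rcases hD.prec_trichotomy ht hg' with h | h | h
  · rw [hD.gammaOf_eq_left_of_prec hA hA' hB hAA' hA'B hAB h]
    exact Or.inl (hD.lt_of_prec_of_memPlus ht hg' h hplus)
  · exact Or.inr (hD.gammaOf_eq_right_of_prec hA hA' hB hAA' hA'B hAB h).symm
  -- `A'` and `B` first differ in the class where `A` and `A'` do, so `γ(A', B) = γ(A', A)`.
  have hsigma : gammaOf D A' B = gammaOf D A' A := by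
    rw [hA'.eq_sigma_of_rep_eq hD (hD.gammaOf_mem hA hA' hAA') hg'
      (hD.gammaOf_notMem hA' hB hA'B) h, hD.gammaOf_swap hA hA' hAA']
  have hminus : D.memMinus (gammaOf D A' B) := by
    rwa [hsigma, hD.gammaOf_swap hA hA' hAA', hD.memMinus_sigma_iff ht]
  rcases hD.prec_trichotomy hg' hg with h' | h' | h'
  · exact Or.inl (hD.lt_of_prec_of_memMinus hg' hg h' hminus)
  · rw [hsigma] at h'
    exact Or.inr (hD.gammaOf_eq_right_of_prec hA' hA hB (Ne.symm hAA') hAB hA'B h')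
  · exact Or.inr (hB.eq_of_rep_eq hD (hD.gammaOf_mem hA' hB hA'B)
      (hD.gammaOf_mem hA hB hAB) h')

theorem gammaOf_le_gammaOf_of_le_left (hA' : D.IsTransversal A') (hAB : A ≠ B)
    (hA'B : A' ≠ B) (hle : (levelSucc D).lt A A' ∨ A = A') :
    D.lt (gammaOf D A' B) (gammaOf D A B) ∨ gammaOf D A' B = gammaOf D A B := by
  by_cases hAA' : A = A'
  · exact Or.inr (by rw [hAA'])
  exact hD.gammaOf_replacement_of_memPlus hA hB hA' hAB hA'B hAA' (hle.resolve_right hAA')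

theorem gammaOf_le_gammaOf_of_le_right (hB' : D.IsTransversal B') (hAB : A ≠ B)
    (hAB' : A ≠ B') (hle : (levelSucc D).lt B B' ∨ B = B') :
    D.lt (gammaOf D A B) (gammaOf D A B') ∨ gammaOf D A B = gammaOf D A B' := by
  -- `γ(Y, X) = σ γ(X, Y)` and `σ` reverses `<`, so this is the left version for `(B, A, B')`.
  have hg := hD.mem_gammaOf hA hB hAB
  have hg' := hD.mem_gammaOf hA hB' hAB'
  have h := hD.gammaOf_le_gammaOf_of_le_left hB hA hB' (Ne.symm hAB) (Ne.symm hAB') hle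
  rw [hD.gammaOf_swap hA hB hAB, hD.gammaOf_swap hA hB' hAB'] at h
  by_cases hgg' : gammaOf D A B = gammaOf D A B'
  · exact Or.inr hgg'
  rcases h with h | h
  · exact Or.inl ((hD.lt_iff_lt_sigma hg hg' hgg').mpr h)
  · exact Or.inr (hD.eq_of_sigma_eq hg' hg h).symm

end IsAdmissible

end LevelData

section level2

variable {n : ℕ} {p : FT 2}

theorem level2_mem_iff :
    (level2 n).mem p ↔ p.1 + p.2 = 2 * n + 1 ∧ 1 ≤ p.1 ∧ 1 ≤ p.2 := by
  constructor
  · rintro ⟨i, h1, h2, rfl | rfl⟩ <;> dsimp only <;> omega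
  · rintro ⟨hs, h1, h2⟩
    by_cases hp : p.2 ≤ n
    · exact ⟨p.2, h2, hp, Or.inl (Prod.ext (by dsimp only; omega) rfl)⟩
    · exact ⟨p.1, h1, by omega, Or.inr (Prod.ext rfl (by dsimp only; omega))⟩

theorem level2_memMinus_iff :
    (level2 n).memMinus p ↔ p.1 + p.2 = 2 * n + 1 ∧ 1 ≤ p.2 ∧ p.2 ≤ n := by
  constructor
  · rintro ⟨i, h1, h2, rfl⟩
    dsimp only
    omega
  · rintro ⟨hs, h1, h2⟩
    exact ⟨p.2, h1, h2, Prod.ext (by dsimp only; omega) rfl⟩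

theorem level2_memPlus_iff :
    (level2 n).memPlus p ↔ p.1 + p.2 = 2 * n + 1 ∧ 1 ≤ p.1 ∧ p.1 ≤ n := by
  constructor
  · rintro ⟨i, h1, h2, rfl⟩
    dsimp only
    omega
  · rintro ⟨hs, h1, h2⟩
    exact ⟨p.1, h1, h2, Prod.ext rfl (by dsimp only; omega)⟩

theorem isAdmissible_level2 (hn : 1 ≤ n) : (level2 n).IsAdmissible where
  finite_mem := ((Set.finite_Iic (2 * n + 1)).prod (Set.finite_Iic (2 * n + 1))).subset
    fun p hp => by
      have := level2_mem_iff.mp hp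
      exact ⟨Set.mem_Iic.mpr (by omega), Set.mem_Iic.mpr (by omega)⟩
  exists_mem := ⟨(2 * n, 1), level2_mem_iff.mpr (by dsimp only; omega)⟩
  sigma_mem hp := by rw [level2_mem_iff] at hp ⊢; dsimp only [level2]; omega
  sigma_sigma _ := rfl
  sigma_ne hp h := by
    rw [level2_mem_iff] at hp
    have := congrArg Prod.fst h
    dsimp only [level2] at this
    omega
  memMinus_iff_not_memPlus hp := by
    rw [level2_mem_iff] at hp; rw [level2_memMinus_iff, level2_memPlus_iff]; omega
  memMinus_iff_memPlus_sigma hp := by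
    rw [level2_mem_iff] at hp; rw [level2_memMinus_iff, level2_memPlus_iff]; dsimp only [level2]
    omega
  lt_asymm _ _ _ h h' := by dsimp only [level2] at h h'; omega
  lt_or_lt {a b} ha hb hab := by
    rw [level2_mem_iff] at ha hb
    have : a.1 ≠ b.1 := fun h => hab (Prod.ext h (by omega))
    dsimp only [level2]
    omega
  lt_trans _ _ _ h h' := by dsimp only [level2] at h h' ⊢; omega
  lt_of_memMinus_of_memPlus _ _ ha hb := by
    rw [level2_memMinus_iff] at ha; rw [level2_memPlus_iff] at hb; dsimp only [level2]; omega
  lt_iff_lt_sigma ha hb _ := by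
    rw [level2_mem_iff] at ha hb; dsimp only [level2]; omega

theorem isAdmissible_L (n : ℕ) (hn : 1 ≤ n) : ∀ k, (L n (k + 2)).IsAdmissible
  | 0 => isAdmissible_level2 hn
  | k + 1 => LevelData.isAdmissible_levelSucc (isAdmissible_L n hn k)

end level2

theorem leF_one_gam_zero {n : ℕ} {p q p' q' : FT 2} (h : q.1 < p.1 → q'.1 < p'.1) :
    leF n 1 (gam n 0 p q) (gam n 0 p' q') := by
  by_cases hpq : q.1 < p.1
  · exact Or.inr (by simp only [gam, hpq, h hpq, decide_true]; rfl)
  · cases hpq' : decide (q'.1 < p'.1)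
    · exact Or.inr (by simp only [gam, hpq, hpq', decide_false]; rfl)
    · exact Or.inl ⟨by simp only [gam, hpq, decide_false]; rfl, hpq'⟩

theorem fst_le_fst_of_leF_two {n : ℕ} {p q : FT 2} (h : leF n 2 p q) : q.1 ≤ p.1 := by
  rcases h with h | rfl
  exacts [le_of_lt h, le_rfl]

/-- Lemma 4 (replacement): for `A, B, A', B' ∈ F_r(n)` with `A ≠ B` (written `r = k + 2`
so that `r ≥ 2`): (i) if `A' ≠ B` and `A ≤_r A'` then `γ(A,B) ≥_{r-1} γ(A',B)`;
(ii) if `A ≠ B'` and `B ≤_r B'` then `γ(A,B) ≤_{r-1} γ(A,B')`. -/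
theorem gamma_replacement (n : ℕ) (hn : 1 ≤ n) (k : ℕ) (A B A' B' : FT (k + 2))
    (hA : memF n (k + 2) A) (hB : memF n (k + 2) B)
    (hA' : memF n (k + 2) A') (hB' : memF n (k + 2) B')
    (hAB : A ≠ B) :
    (A' ≠ B → leF n (k + 2) A A' →
      leF n (k + 1) (gam n k A' B) (gam n k A B)) ∧
    (A ≠ B' → leF n (k + 2) B B' →
      leF n (k + 1) (gam n k A B) (gam n k A B')) := by
  cases k with
  | zero =>
    refine ⟨fun _ hle => leF_one_gam_zero ?_, fun _ hle => leF_one_gam_zero ?_⟩ <;>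
    · have := fst_le_fst_of_leF_two hle
      omega
  | succ k =>
    have hD := isAdmissible_L n hn k
    exact ⟨hD.gammaOf_le_gammaOf_of_le_left hA hB hA' hAB,
      hD.gammaOf_le_gammaOf_of_le_right hA hB hB' hAB⟩
end

section
/- For all integers r ≥ 3 and n ≥ 1, the relation <_r (defined by A <_r B iff γ(A,B) ∈ F_{r-1}^+(n)) is a strict total order on F_r(n): for all distinct A, B ∈ F_r(n) exactly one of A <_r B and B <_r A holds, and <_r is transitive. -/
open scoped Classical

namespace ProofAux

variable {α : Type}

/-- Inductive invariant on level data. -/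
structure Good (D : LevelData α) : Prop where
  fin : Set.Finite {a | D.mem a}
  sig_mem : ∀ a, D.mem a → D.mem (D.sigma a)
  sig_sig : ∀ a, D.mem a → D.sigma (D.sigma a) = a
  mp : ∀ a, D.mem a → (D.memMinus a ↔ ¬ D.memPlus a)
  smp : ∀ a, D.mem a → (D.memMinus a ↔ D.memPlus (D.sigma a))
  lt_total : ∀ a b, D.mem a → D.mem b → a ≠ b → D.lt a b ∨ D.lt b a
  lt_asymm : ∀ a b, D.mem a → D.mem b → a ≠ b → D.lt a b → D.lt b a → False
  lt_trans : ∀ a b c, D.mem a → D.mem b → D.mem c → D.lt a b → D.lt b c → D.lt a c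
  min_ex : ∃ m, (D.mem m ∧ ∀ b, D.mem b → b ≠ m → D.lt m b) ∧
      (∀ b, D.mem b → b ≠ D.sigma m → D.lt b (D.sigma m))

variable {D : LevelData α}

lemma plus_of_not_minus (hD : Good D) {a : α} (ha : D.mem a) (h : ¬ D.memMinus a) :
    D.memPlus a := by
  by_contra hp; exact h ((hD.mp a ha).mpr hp)

lemma minus_sigma (hD : Good D) {a : α} (ha : D.mem a) :
    D.memMinus (D.sigma a) ↔ D.memPlus a := by
  have := hD.smp (D.sigma a) (hD.sig_mem a ha)
  rwa [hD.sig_sig a ha] at this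

lemma mem_rep (hD : Good D) {a : α} (ha : D.mem a) : D.mem (D.rep a) := by
  unfold LevelData.rep; split
  · exact ha
  · exact hD.sig_mem a ha

lemma rep_sigma (hD : Good D) {a : α} (ha : D.mem a) : D.rep (D.sigma a) = D.rep a := by
  by_cases h : D.memMinus a
  · have h2 : ¬ D.memMinus (D.sigma a) := by
      rw [minus_sigma hD ha]; exact (hD.mp a ha).mp h
    unfold LevelData.rep
    rw [if_pos h, if_neg h2, hD.sig_sig a ha]
  · have h2 : D.memMinus (D.sigma a) := (minus_sigma hD ha).mpr (plus_of_not_minus hD ha h)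
    unfold LevelData.rep
    rw [if_pos h2, if_neg h]

lemma rep_eq_rep (hD : Good D) {a b : α} (ha : D.mem a) (hb : D.mem b)
    (h : D.rep a = D.rep b) : b = a ∨ b = D.sigma a := by
  unfold LevelData.rep at h
  split at h <;> split at h
  · exact Or.inl h.symm
  · right; rw [h, hD.sig_sig b hb]
  · exact Or.inr h.symm
  · left
    have := congrArg D.sigma h
    rw [hD.sig_sig a ha, hD.sig_sig b hb] at this
    exact this.symm

lemma prec_asymm (hD : Good D) {a b : α} (ha : D.mem a) (hb : D.mem b)
    (h1 : D.prec a b) (h2 : D.prec b a) : False :=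
  hD.lt_asymm _ _ (mem_rep hD ha) (mem_rep hD hb) h1.1 h1.2 h2.2

lemma prec_trans (hD : Good D) {a b c : α} (ha : D.mem a) (hb : D.mem b) (hc : D.mem c)
    (h1 : D.prec a b) (h2 : D.prec b c) : D.prec a c := by
  constructor
  · intro h
    exact hD.lt_asymm _ _ (mem_rep hD hc) (mem_rep hD hb) h2.1.symm (h ▸ h1.2) h2.2
  · exact hD.lt_trans _ _ _ (mem_rep hD ha) (mem_rep hD hb) (mem_rep hD hc) h1.2 h2.2

lemma prec_total (hD : Good D) {a b : α} (ha : D.mem a) (hb : D.mem b)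
    (h : D.rep a ≠ D.rep b) : D.prec a b ∨ D.prec b a := by
  rcases hD.lt_total _ _ (mem_rep hD ha) (mem_rep hD hb) h with h1 | h1
  · exact Or.inl ⟨h, h1⟩
  · exact Or.inr ⟨h.symm, h1⟩

lemma prec_sigma_left (hD : Good D) {a : α} (b : α) (ha : D.mem a) :
    D.prec (D.sigma a) b ↔ D.prec a b := by
  unfold LevelData.prec; rw [rep_sigma hD ha]

lemma prec_sigma_right (hD : Good D) (a : α) {b : α} (hb : D.mem b) :
    D.prec a (D.sigma b) ↔ D.prec a b := by
  unfold LevelData.prec; rw [rep_sigma hD hb]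

section Succ

variable [DecidableEq α] [Nonempty α]

lemma sdiff_nonempty' {A B : Finset α} (hA : (levelSucc D).mem A)
    (hB : (levelSucc D).mem B) (hne : A ≠ B) : (B \ A).Nonempty := by
  rw [Finset.sdiff_nonempty]
  intro hsub
  have : ¬ A ⊆ B := fun h => hne (Finset.Subset.antisymm h hsub)
  obtain ⟨a, haA, haB⟩ := Finset.not_subset.mp this
  have ham := hA.1 a haA
  have h1 : D.sigma a ∈ B := by
    by_contra h
    exact haB ((hB.2 a ham).mpr h)
  exact (hA.2 a ham).mp haA (hsub h1)

lemma sigma_mem_sdiff {A B : Finset α} (hA : (levelSucc D).mem A)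
    (hB : (levelSucc D).mem B) {x : α} (hx : x ∈ A \ B) : D.sigma x ∈ B \ A := by
  rw [Finset.mem_sdiff] at hx ⊢
  obtain ⟨hxA, hxB⟩ := hx
  have hxm := hA.1 x hxA
  constructor
  · by_contra h; exact hxB ((hB.2 x hxm).mpr h)
  · exact (hA.2 x hxm).mp hxA

lemma exists_prec_min (hD : Good D) :
    ∀ s : Finset α, s.Nonempty → (∀ a ∈ s, D.mem a) →
      (∀ a ∈ s, ∀ b ∈ s, a ≠ b → D.rep a ≠ D.rep b) →
      ∃ g ∈ s, ∀ b ∈ s, b = g ∨ D.prec g b := by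
  intro s
  induction s using Finset.induction_on with
  | empty => intro h; exact absurd h (by simp)
  | @insert a s ha ih =>
    intro _ hmem hdist
    have ham : D.mem a := hmem a (Finset.mem_insert_self a s)
    rcases s.eq_empty_or_nonempty with rfl | hs
    · refine ⟨a, Finset.mem_insert_self a _, ?_⟩
      intro b hb
      rcases Finset.mem_insert.mp hb with rfl | hb
      · exact Or.inl rfl
      · exact absurd hb (Finset.notMem_empty b)
    · obtain ⟨g, hg, hgm⟩ := ih hs (fun x hx => hmem x (Finset.mem_insert_of_mem hx))
        (fun x hx y hy => hdist x (Finset.mem_insert_of_mem hx) y (Finset.mem_insert_of_mem hy))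
      have hgmem : D.mem g := hmem g (Finset.mem_insert_of_mem hg)
      have hag : a ≠ g := fun h => ha (h ▸ hg)
      have hrne : D.rep a ≠ D.rep g :=
        hdist a (Finset.mem_insert_self a s) g (Finset.mem_insert_of_mem hg) hag
      rcases prec_total hD ham hgmem hrne with hp | hp
      · refine ⟨a, Finset.mem_insert_self a s, ?_⟩
        intro b hb
        rcases Finset.mem_insert.mp hb with rfl | hb
        · exact Or.inl rfl
        · rcases hgm b hb with rfl | h
          · exact Or.inr hp
          · exact Or.inr (prec_trans hD ham hgmem (hmem b (Finset.mem_insert_of_mem hb)) hp h)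
      · refine ⟨g, Finset.mem_insert_of_mem hg, ?_⟩
        intro b hb
        rcases Finset.mem_insert.mp hb with rfl | hb
        · exact Or.inr hp
        · exact hgm b hb

lemma gamma_spec (hD : Good D) {A B : Finset α} (hA : (levelSucc D).mem A)
    (hB : (levelSucc D).mem B) (hne : A ≠ B) :
    gammaOf D A B ∈ B \ A ∧
      ∀ b ∈ B \ A, b = gammaOf D A B ∨ D.prec (gammaOf D A B) b := by
  have h1 : (B \ A).Nonempty := sdiff_nonempty' hA hB hne
  have hmem : ∀ a ∈ B \ A, D.mem a := fun a haa => hB.1 a (Finset.mem_sdiff.mp haa).1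
  have hdist : ∀ x ∈ B \ A, ∀ y ∈ B \ A, x ≠ y → D.rep x ≠ D.rep y := by
    intro x hx y hy hxy h
    rcases rep_eq_rep hD (hmem x hx) (hmem y hy) h with h' | h'
    · exact hxy h'.symm
    · have hxB := (Finset.mem_sdiff.mp hx).1
      have hyB := (Finset.mem_sdiff.mp hy).1
      rw [h'] at hyB
      exact (hB.2 x (hmem x hx)).mp hxB hyB
  obtain ⟨g, hg, hgm⟩ := exists_prec_min hD _ h1 hmem hdist
  have := Classical.epsilon_spec
    (p := fun b => b ∈ B \ A ∧ ∀ b' ∈ B \ A, b' = b ∨ D.prec b b') ⟨g, hg, hgm⟩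
  exact this

lemma gamma_mem (hD : Good D) {A B : Finset α} (hA : (levelSucc D).mem A)
    (hB : (levelSucc D).mem B) (hne : A ≠ B) : D.mem (gammaOf D A B) :=
  hB.1 _ (Finset.mem_sdiff.mp (gamma_spec hD hA hB hne).1).1

lemma gamma_eq (hD : Good D) {A B : Finset α} (hA : (levelSucc D).mem A)
    (hB : (levelSucc D).mem B) (hne : A ≠ B) {g : α} (hg : g ∈ B \ A)
    (hmin : ∀ b ∈ B \ A, b = g ∨ D.prec g b) : gammaOf D A B = g := by
  obtain ⟨hg', hmin'⟩ := gamma_spec hD hA hB hne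
  have hm1 : D.mem (gammaOf D A B) := hB.1 _ (Finset.mem_sdiff.mp hg').1
  have hm2 : D.mem g := hB.1 _ (Finset.mem_sdiff.mp hg).1
  rcases hmin _ hg' with h | h
  · exact h
  · rcases hmin' _ hg with h' | h'
    · exact h'.symm
    · exact absurd h (fun h => prec_asymm hD hm2 hm1 h h')

lemma gamma_swap (hD : Good D) {A B : Finset α} (hA : (levelSucc D).mem A)
    (hB : (levelSucc D).mem B) (hne : A ≠ B) :
    gammaOf D B A = D.sigma (gammaOf D A B) := by
  obtain ⟨hg, hmin⟩ := gamma_spec hD hA hB hne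
  have hgm : D.mem (gammaOf D A B) := hB.1 _ (Finset.mem_sdiff.mp hg).1
  refine gamma_eq hD hB hA hne.symm (sigma_mem_sdiff hB hA hg) ?_
  intro b hb
  have hbm : D.mem b := hA.1 b (Finset.mem_sdiff.mp hb).1
  have hsb : D.sigma b ∈ B \ A := sigma_mem_sdiff hA hB hb
  rcases hmin (D.sigma b) hsb with h | h
  · left; rw [← h, hD.sig_sig b hbm]
  · right
    rw [prec_sigma_left hD b hgm]
    rwa [prec_sigma_right hD _ hbm] at h

lemma agree_before (hD : Good D) {A B : Finset α} (hA : (levelSucc D).mem A)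
    (hB : (levelSucc D).mem B) (hne : A ≠ B) {x : α} (hx : D.mem x)
    (hp : D.prec x (gammaOf D A B)) : x ∈ A ↔ x ∈ B := by
  obtain ⟨hg, hmin⟩ := gamma_spec hD hA hB hne
  have hgm : D.mem (gammaOf D A B) := hB.1 _ (Finset.mem_sdiff.mp hg).1
  constructor
  · intro hxA
    by_contra hxB
    have hs : D.sigma x ∈ B \ A := sigma_mem_sdiff hA hB (Finset.mem_sdiff.mpr ⟨hxA, hxB⟩)
    rcases hmin _ hs with h | h
    · exact hp.1 (by rw [← h, rep_sigma hD hx])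
    · rw [prec_sigma_right hD _ hx] at h
      exact prec_asymm hD hx hgm hp h
  · intro hxB
    by_contra hxA
    rcases hmin x (Finset.mem_sdiff.mpr ⟨hxB, hxA⟩) with h | h
    · exact hp.1 (by rw [h])
    · exact prec_asymm hD hx hgm hp h

lemma trich (hD : Good D) {A B : Finset α} (hA : (levelSucc D).mem A)
    (hB : (levelSucc D).mem B) (hne : A ≠ B) :
    ((levelSucc D).lt A B ∨ (levelSucc D).lt B A) ∧
      ¬ ((levelSucc D).lt A B ∧ (levelSucc D).lt B A) := by
  have hgm : D.mem (gammaOf D A B) := gamma_mem hD hA hB hne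
  have h1 : (levelSucc D).lt A B ↔ D.memPlus (gammaOf D A B) := Iff.rfl
  have h2 : (levelSucc D).lt B A ↔ ¬ D.memPlus (gammaOf D A B) := by
    show D.memPlus (gammaOf D B A) ↔ _
    rw [gamma_swap hD hA hB hne, ← hD.smp _ hgm, hD.mp _ hgm]
  by_cases hp : D.memPlus (gammaOf D A B)
  · exact ⟨Or.inl (h1.mpr hp), fun h => h2.mp h.2 hp⟩
  · exact ⟨Or.inr (h2.mpr hp), fun h => hp (h1.mp h.1)⟩

lemma transit (hD : Good D) {A B C : Finset α} (hA : (levelSucc D).mem A)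
    (hB : (levelSucc D).mem B) (hC : (levelSucc D).mem C)
    (h1 : (levelSucc D).lt A B) (h2 : (levelSucc D).lt B C) : (levelSucc D).lt A C := by
  by_cases hAB : A = B
  · exact hAB ▸ h2
  by_cases hBC : B = C
  · exact hBC ▸ h1
  have hAC : A ≠ C := by
    rintro rfl
    exact (trich hD hA hB hAB).2 ⟨h1, h2⟩
  obtain ⟨hg1, hmin1⟩ := gamma_spec hD hA hB hAB
  obtain ⟨hg2, hmin2⟩ := gamma_spec hD hB hC hBC
  have hg1m : D.mem (gammaOf D A B) := hB.1 _ (Finset.mem_sdiff.mp hg1).1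
  have hg2m : D.mem (gammaOf D B C) := hC.1 _ (Finset.mem_sdiff.mp hg2).1
  have hp1 : D.memPlus (gammaOf D A B) := h1
  have hp2 : D.memPlus (gammaOf D B C) := h2
  have hrne : D.rep (gammaOf D A B) ≠ D.rep (gammaOf D B C) := by
    intro h
    rcases rep_eq_rep hD hg1m hg2m h with h' | h'
    · rw [h'] at hg2
      exact (Finset.mem_sdiff.mp hg2).2 (Finset.mem_sdiff.mp hg1).1
    · rw [h'] at hp2
      exact (hD.mp _ hg1m).mp ((hD.smp _ hg1m).mpr hp2) hp1
  show D.memPlus (gammaOf D A C)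
  rcases prec_total hD hg1m hg2m hrne with hlt | hlt
  · -- first difference of A,B comes strictly before that of B,C
    have hg1C : gammaOf D A B ∈ C :=
      (agree_before hD hB hC hBC hg1m hlt).mp (Finset.mem_sdiff.mp hg1).1
    have hkey : gammaOf D A C = gammaOf D A B := by
      refine gamma_eq hD hA hC hAC
        (Finset.mem_sdiff.mpr ⟨hg1C, (Finset.mem_sdiff.mp hg1).2⟩) ?_
      intro y hy
      by_cases hyg : y = gammaOf D A B
      · exact Or.inl hyg
      right
      have hym : D.mem y := hC.1 y (Finset.mem_sdiff.mp hy).1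
      have hyrne : D.rep y ≠ D.rep (gammaOf D A B) := by
        intro h
        rcases rep_eq_rep hD hym hg1m h with h' | h'
        · exact hyg h'.symm
        · rw [h'] at hg1C
          exact (hC.2 y hym).mp (Finset.mem_sdiff.mp hy).1 hg1C
      rcases prec_total hD hym hg1m hyrne with hp | hp
      · exfalso
        have hyBC : y ∈ B ↔ y ∈ C :=
          agree_before hD hB hC hBC hym (prec_trans hD hym hg1m hg2m hp hlt)
        have hyAB : y ∈ A ↔ y ∈ B := agree_before hD hA hB hAB hym hp
        exact (Finset.mem_sdiff.mp hy).2
          (hyAB.mpr (hyBC.mpr (Finset.mem_sdiff.mp hy).1))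
      · exact hp
    rw [hkey]; exact hp1
  · -- first difference of B,C comes strictly before that of A,B
    have hg2A : gammaOf D B C ∉ A := by
      intro h
      exact (Finset.mem_sdiff.mp hg2).2
        ((agree_before hD hA hB hAB hg2m hlt).mp h)
    have hkey : gammaOf D A C = gammaOf D B C := by
      refine gamma_eq hD hA hC hAC
        (Finset.mem_sdiff.mpr ⟨(Finset.mem_sdiff.mp hg2).1, hg2A⟩) ?_
      intro y hy
      by_cases hyg : y = gammaOf D B C
      · exact Or.inl hyg
      right
      have hym : D.mem y := hC.1 y (Finset.mem_sdiff.mp hy).1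
      have hyrne : D.rep y ≠ D.rep (gammaOf D B C) := by
        intro h
        rcases rep_eq_rep hD hym hg2m h with h' | h'
        · exact hyg h'.symm
        · have hg2C := (Finset.mem_sdiff.mp hg2).1
          rw [h'] at hg2C
          exact (hC.2 y hym).mp (Finset.mem_sdiff.mp hy).1 hg2C
      rcases prec_total hD hym hg2m hyrne with hp | hp
      · exfalso
        have hyBC : y ∈ B ↔ y ∈ C := agree_before hD hB hC hBC hym hp
        have hyAB : y ∈ A ↔ y ∈ B :=
          agree_before hD hA hB hAB hym (prec_trans hD hym hg2m hg1m hp hlt)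
        exact (Finset.mem_sdiff.mp hy).2
          (hyAB.mpr (hyBC.mpr (Finset.mem_sdiff.mp hy).1))
      · exact hp
    rw [hkey]; exact hp2

section GoodSucc

lemma mem_image_sigma (hD : Good D) {X : Finset α} (hX : (levelSucc D).mem X)
    {c : α} (hc : D.mem c) : c ∈ X.image D.sigma ↔ D.sigma c ∈ X := by
  constructor
  · intro h
    obtain ⟨b, hb, hbc⟩ := Finset.mem_image.mp h
    have hb' : b = D.sigma c := by
      rw [← hbc, hD.sig_sig b (hX.1 b hb)]
    exact hb' ▸ hb
  · intro h
    have := Finset.mem_image_of_mem D.sigma h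
    rwa [hD.sig_sig c hc] at this

lemma memSucc_image_sigma (hD : Good D) {X : Finset α} (hX : (levelSucc D).mem X) :
    (levelSucc D).mem (X.image D.sigma) := by
  constructor
  · intro a haI
    obtain ⟨b, hb, rfl⟩ := Finset.mem_image.mp haI
    exact hD.sig_mem b (hX.1 b hb)
  · intro a ham
    have h2 := hX.2 (D.sigma a) (hD.sig_mem a ham)
    rw [hD.sig_sig a ham] at h2
    show a ∈ X.image D.sigma ↔ D.sigma a ∉ X.image D.sigma
    rw [mem_image_sigma hD hX ham, mem_image_sigma hD hX (hD.sig_mem a ham),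
      hD.sig_sig a ham]
    exact h2

lemma memSucc_minusSet (hD : Good D) :
    (levelSucc D).mem (hD.fin.toFinset.filter (fun a => D.memMinus a)) := by
  constructor
  · intro a haM
    exact hD.fin.mem_toFinset.mp (Finset.mem_filter.mp haM).1
  · intro a ham
    have h1 : a ∈ hD.fin.toFinset.filter (fun a => D.memMinus a) ↔ D.memMinus a := by
      simp [Finset.mem_filter, hD.fin.mem_toFinset, ham]
    have h2 : D.sigma a ∈ hD.fin.toFinset.filter (fun a => D.memMinus a) ↔
        D.memMinus (D.sigma a) := by
      simp [Finset.mem_filter, hD.fin.mem_toFinset, hD.sig_mem a ham]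
    rw [h1, h2, minus_sigma hD ham, hD.mp a ham]

lemma good_levelSucc (hD : Good D) : Good (levelSucc D) := by
  obtain ⟨m, ⟨hm1, hm2⟩, hm3⟩ := hD.min_ex
  have hmin_spec := Classical.epsilon_spec
    (p := fun M => D.mem M ∧ ∀ B, D.mem B → B ≠ M → D.lt M B) ⟨m, hm1, hm2⟩
  have hmax_spec := Classical.epsilon_spec
    (p := fun M => D.mem M ∧ ∀ B, D.mem B → B ≠ M → D.lt B M)
    ⟨D.sigma m, hD.sig_mem m hm1, hm3⟩
  have hemm : Classical.epsilon
      (fun M => D.mem M ∧ ∀ B, D.mem B → B ≠ M → D.lt M B) = m := by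
    by_contra h
    exact hD.lt_asymm _ _ hmin_spec.1 hm1 h (hmin_spec.2 m hm1 (Ne.symm h))
      (hm2 _ hmin_spec.1 h)
  have heMM : Classical.epsilon
      (fun M => D.mem M ∧ ∀ B, D.mem B → B ≠ M → D.lt B M) = D.sigma m := by
    by_contra h
    exact hD.lt_asymm _ _ hmax_spec.1 (hD.sig_mem m hm1) h
      (hm3 _ hmax_spec.1 h) (hmax_spec.2 _ (hD.sig_mem m hm1) (Ne.symm h))
  refine { fin := ?_, sig_mem := ?_, sig_sig := ?_, mp := ?_, smp := ?_,
           lt_total := ?_, lt_asymm := ?_, lt_trans := ?_, min_ex := ?_ }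
  · -- fin
    apply Set.Finite.subset (hD.fin.toFinset.powerset.finite_toSet)
    intro X hX
    rw [Finset.mem_coe, Finset.mem_powerset]
    exact fun x hx => hD.fin.mem_toFinset.mpr (hX.1 x hx)
  · -- sig_mem
    intro X hX
    exact memSucc_image_sigma hD hX
  · -- sig_sig
    intro X hX
    show (X.image D.sigma).image D.sigma = X
    rw [Finset.image_image]
    calc X.image (D.sigma ∘ D.sigma)
        = X.image id := Finset.image_congr
          (fun x hx => hD.sig_sig x (hX.1 x (Finset.mem_coe.mp hx)))
      _ = X := Finset.image_id
  · -- mp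
    intro X hX
    show Classical.epsilon _ ∈ X ↔ ¬ (Classical.epsilon _ ∈ X)
    rw [hemm, heMM]
    exact hX.2 m hm1
  · -- smp
    intro X hX
    show Classical.epsilon _ ∈ X ↔ Classical.epsilon _ ∈ X.image D.sigma
    rw [hemm, heMM, mem_image_sigma hD hX (hD.sig_mem m hm1), hD.sig_sig m hm1]
  · -- lt_total
    intro A B hA hB hne
    exact (trich hD hA hB hne).1
  · -- lt_asymm
    intro A B hA hB hne h1 h2
    exact (trich hD hA hB hne).2 ⟨h1, h2⟩
  · -- lt_trans
    intro A B C hA hB hC h1 h2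
    exact transit hD hA hB hC h1 h2
  · -- min_ex
    refine ⟨hD.fin.toFinset.filter (fun a => D.memMinus a),
      ⟨memSucc_minusSet hD, ?_⟩, ?_⟩
    · intro B hB hne
      have hspec := gamma_spec hD (memSucc_minusSet hD) hB hne.symm
      show D.memPlus (gammaOf D _ B)
      have hg := Finset.mem_sdiff.mp hspec.1
      have hgm : D.mem (gammaOf D _ B) := hB.1 _ hg.1
      apply plus_of_not_minus hD hgm
      intro hmin
      exact hg.2 (Finset.mem_filter.mpr ⟨hD.fin.mem_toFinset.mpr hgm, hmin⟩)
    · intro B hB hne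
      have hMmem := memSucc_image_sigma hD (memSucc_minusSet hD)
      have hspec := gamma_spec hD hB hMmem hne
      show D.memPlus (gammaOf D B _)
      have hg := Finset.mem_sdiff.mp hspec.1
      obtain ⟨b, hb, hbe⟩ := Finset.mem_image.mp hg.1
      have hbmem : D.mem b := hD.fin.mem_toFinset.mp (Finset.mem_filter.mp hb).1
      have hbmin : D.memMinus b := (Finset.mem_filter.mp hb).2
      exact hbe ▸ (hD.smp b hbmem).mp hbmin

end GoodSucc

end Succ


lemma pair_ne {a b c d : ℕ} (h : ((a, b) : ℕ × ℕ) ≠ (c, d)) : ¬ (a = c ∧ b = d) :=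
  fun hc => h (by rw [hc.1, hc.2])

lemma good_level2 (n : ℕ) (hn : 1 ≤ n) : Good (level2 n) := by
  refine { fin := ?_, sig_mem := ?_, sig_sig := ?_, mp := ?_, smp := ?_,
           lt_total := ?_, lt_asymm := ?_, lt_trans := ?_, min_ex := ?_ }
  · apply Set.Finite.subset ((Finset.range (2*n+2) ×ˢ Finset.range (2*n+2)).finite_toSet)
    rintro p ⟨i, hi1, hi2, hp | hp⟩ <;> subst hp <;>
      simp only [Finset.coe_product, Finset.coe_range, Set.mem_prod, Set.mem_Iio] <;>
      constructor <;> omega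
  · rintro p ⟨i, hi1, hi2, hp | hp⟩ <;> subst hp
    · exact ⟨i, hi1, hi2, Or.inr rfl⟩
    · exact ⟨i, hi1, hi2, Or.inl rfl⟩
  · intro p _
    rfl
  · rintro p ⟨i, hi1, hi2, hp | hp⟩ <;> subst hp <;> constructor
    · rintro ⟨j, hj1, hj2, hq⟩ ⟨l, hl1, hl2, hq'⟩
      have hq := Prod.mk.inj (α := ℕ) (β := ℕ) hq; have hq' := Prod.mk.inj (α := ℕ) (β := ℕ) hq'
      omega
    · intro _
      exact ⟨i, hi1, hi2, rfl⟩
    · rintro ⟨j, hj1, hj2, hq⟩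
      have hq := Prod.mk.inj (α := ℕ) (β := ℕ) hq
      exfalso; omega
    · intro h
      exact absurd ⟨i, hi1, hi2, rfl⟩ h
  · rintro p ⟨i, hi1, hi2, hp | hp⟩ <;> subst hp <;> constructor
    · intro _
      exact ⟨i, hi1, hi2, rfl⟩
    · intro _
      exact ⟨i, hi1, hi2, rfl⟩
    · rintro ⟨j, hj1, hj2, hq⟩
      have hq := Prod.mk.inj (α := ℕ) (β := ℕ) hq; exfalso; omega
    · rintro ⟨j, hj1, hj2, hq⟩
      simp only [level2] at hq
      have hq := Prod.mk.inj (α := ℕ) (β := ℕ) hq; exfalso; omega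
  · rintro p q ⟨i, hi1, hi2, hp | hp⟩ ⟨j, hj1, hj2, hq | hq⟩ hne <;> subst hp <;> subst hq
    · have hne' := pair_ne hne
      show 2*n-j+1 < 2*n-i+1 ∨ 2*n-i+1 < 2*n-j+1
      omega
    · show j < 2*n-i+1 ∨ 2*n-i+1 < j
      omega
    · show 2*n-j+1 < i ∨ i < 2*n-j+1
      omega
    · have hne' := pair_ne hne
      show j < i ∨ i < j
      omega
  · intro a b _ _ _ h1 h2
    have h1' : b.1 < a.1 := h1
    have h2' : a.1 < b.1 := h2
    omega
  · intro a b c _ _ _ h1 h2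
    have h1' : b.1 < a.1 := h1
    have h2' : c.1 < b.1 := h2
    show c.1 < a.1
    omega
  · refine ⟨((2*n, 1) : ℕ × ℕ), ⟨⟨1, le_refl 1, hn, Or.inl ?_⟩, ?_⟩, ?_⟩
    · show ((2*n, 1) : ℕ × ℕ) = (2*n-1+1, 1); rw [Prod.mk.injEq]; omega
    · rintro b ⟨i, hi1, hi2, hb | hb⟩ hne <;> subst hb
      · have hne' := pair_ne (c := 2*n) (d := 1) hne
        show 2*n-i+1 < 2*n
        omega
      · show i < 2*n
        omega
    · rintro b ⟨i, hi1, hi2, hb | hb⟩ hne <;> subst hb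
      · show 1 < 2*n-i+1
        omega
      · have hne' := pair_ne (c := 1) (d := 2*n) hne
        show 1 < i
        omega

lemma good_L (n : ℕ) (hn : 1 ≤ n) : ∀ k : ℕ, Good (L n (k + 2))
  | 0 => good_level2 n hn
  | (k + 1) => good_levelSucc (good_L n hn k)

end ProofAux

/-- The relation `<_r` is a strict total order on `F_r(n)` for `r ≥ 3` (written
`r = k + 3`): any two distinct members of `F_r(n)` are comparable in exactly one
direction, and `<_r` is transitive on `F_r(n)`. -/
theorem ltF_is_total_order (n : ℕ) (hn : 1 ≤ n) (k : ℕ) :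
    (∀ A B : FT (k + 3), memF n (k + 3) A → memF n (k + 3) B → A ≠ B →
      (((L n (k + 3)).lt A B ∨ (L n (k + 3)).lt B A) ∧
        ¬ ((L n (k + 3)).lt A B ∧ (L n (k + 3)).lt B A))) ∧
    (∀ A B C : FT (k + 3), memF n (k + 3) A → memF n (k + 3) B → memF n (k + 3) C →
      (L n (k + 3)).lt A B → (L n (k + 3)).lt B C → (L n (k + 3)).lt A C) := by
  have hG : ProofAux.Good (L n (k + 2)) := ProofAux.good_L n hn k
  constructor
  · intro A B hA hB hne
    exact ProofAux.trich hG hA hB hne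
  · intro A B C hA hB hC h1 h2
    exact ProofAux.transit hG hA hB hC h1 h2
end
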